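/- arXiv:1510.05419 — 6 statements merged into one kernel-verified Lean document; each statement's English description precedes it below -/
import Mathlib

section
/- The simplicial join Δ_1 ∗ Δ_2 of two finite nonempty simplicial complexes on disjoint vertex sets is shellable if and only if both Δ_1 and Δ_2 are shellable. -/
/-- An ordering of (distinct) facets is a shelling: for each `k` with earlier facets,
the subcomplex `B k = (⋃_{i<k} closure (C i)) ∩ closure (C k)` is pure of
dimension `dim (C k) - 1`, i.e. every face of `B k` is contained in a face of `B k`
of cardinality `(C k).card - 1`. -/
def IsShellingOrder {V : Type} [DecidableEq V] (m : ℕ) (C : Fin m → Finset V) : Prop :=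
  ∀ k : Fin m, 0 < (k : ℕ) → ∀ σ : Finset V, σ ⊆ C k → (∃ i, i < k ∧ σ ⊆ C i) →
    ∃ τ : Finset V, τ ⊆ C k ∧ (∃ i, i < k ∧ τ ⊆ C i) ∧ σ ⊆ τ ∧ τ.card = (C k).card - 1

/-- A finite abstract simplicial complex on vertex type `V`. -/
structure SimpComplex (V : Type) [DecidableEq V] where
  faces : Finset (Finset V)
  down_closed : ∀ σ ∈ faces, ∀ τ ⊆ σ, τ ∈ faces

/-- A facet is a maximal face. -/
def IsFacet {V : Type} [DecidableEq V] (Δ : SimpComplex V) (σ : Finset V) : Prop :=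
  σ ∈ Δ.faces ∧ ∀ τ ∈ Δ.faces, σ ⊆ τ → σ = τ

/-- A complex is shellable if its facets admit a shelling order. -/
def Shellable {V : Type} [DecidableEq V] (Δ : SimpComplex V) : Prop :=
  ∃ (m : ℕ) (C : Fin m → Finset V), Function.Injective C ∧ (∀ i, IsFacet Δ (C i)) ∧
    (∀ σ, IsFacet Δ σ → ∃ i, C i = σ) ∧ IsShellingOrder m C

namespace JoinShellAux

variable {V : Type} [DecidableEq V]

lemma exists_facet (Δ : SimpComplex V) {σ : Finset V} (h : σ ∈ Δ.faces) :
    ∃ F, IsFacet Δ F ∧ σ ⊆ F := by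
  obtain ⟨F, hF, hmax⟩ := (Δ.faces.filter (fun τ => σ ⊆ τ)).exists_max_image
    (fun τ => τ.card) ⟨σ, by simp [h]⟩
  simp only [Finset.mem_filter] at hF
  refine ⟨F, ⟨hF.1, fun τ hτ hsub => ?_⟩, hF.2⟩
  exact Finset.eq_of_subset_of_card_le hsub
    (hmax τ (Finset.mem_filter.2 ⟨hτ, hF.2.trans hsub⟩))

lemma lt_mul_of {p q i j : ℕ} (hi : i < p) (hj : j < q) : q * i + j < p * q := by
  have h1 : q * (i + 1) ≤ q * p := Nat.mul_le_mul (le_refl q) (by omega)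
  have h2 : q * (i + 1) = q * i + q := by ring
  have h3 : q * p = p * q := Nat.mul_comm q p
  omega

lemma div_of {q i j : ℕ} (hq : 0 < q) (hj : j < q) : (q * i + j) / q = i := by
  rw [Nat.mul_add_div hq, Nat.div_eq_of_lt hj, Nat.add_zero]

lemma mod_of {q i j : ℕ} (hj : j < q) : (q * i + j) % q = j := by
  rw [Nat.mul_add_mod, Nat.mod_eq_of_lt hj]

lemma lex_lt {q i i' j j' : ℕ} (hj : j < q) (hj' : j' < q) :
    q * i' + j' < q * i + j ↔ (i' < i ∨ (i' = i ∧ j' < j)) := by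
  constructor
  · intro h
    rcases lt_trichotomy i' i with h1 | h1 | h1
    · exact Or.inl h1
    · exact Or.inr ⟨h1, by subst h1; omega⟩
    · exfalso
      have h2 : q * (i + 1) ≤ q * i' := Nat.mul_le_mul (le_refl q) (by omega)
      have h3 : q * (i + 1) = q * i + q := by ring
      omega
  · rintro (h | ⟨rfl, h⟩)
    · have h2 : q * (i' + 1) ≤ q * i := Nat.mul_le_mul (le_refl q) (by omega)
      have h3 : q * (i' + 1) = q * i' + q := by ring
      omega
    · omega

section Pieces

variable {Δ₁ Δ₂ J : SimpComplex V}
  (hdisj : ∀ σ₁ ∈ Δ₁.faces, ∀ σ₂ ∈ Δ₂.faces, Disjoint σ₁ σ₂)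
  (hJ : ∀ σ, σ ∈ J.faces ↔ ∃ σ₁ ∈ Δ₁.faces, ∃ σ₂ ∈ Δ₂.faces, σ = σ₁ ∪ σ₂)

include hdisj in
lemma piece_left {σ ρ τ : Finset V} (hσ : σ ∈ Δ₁.faces) (hτ : τ ∈ Δ₂.faces)
    (h : σ ⊆ ρ ∪ τ) : σ ⊆ ρ := by
  intro x hx
  rcases Finset.mem_union.1 (h hx) with h' | h'
  · exact h'
  · exact absurd h' (Finset.disjoint_left.1 (hdisj σ hσ τ hτ) hx)

include hdisj in
lemma piece_right {σ ρ τ : Finset V} (hσ : σ ∈ Δ₂.faces) (hτ : τ ∈ Δ₁.faces)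
    (h : σ ⊆ τ ∪ ρ) : σ ⊆ ρ := by
  intro x hx
  rcases Finset.mem_union.1 (h hx) with h' | h'
  · exact absurd hx (Finset.disjoint_left.1 (hdisj τ hτ σ hσ) h')
  · exact h'

include hdisj hJ in
lemma facet_union {F₁ F₂ : Finset V} (h1 : IsFacet Δ₁ F₁) (h2 : IsFacet Δ₂ F₂) :
    IsFacet J (F₁ ∪ F₂) := by
  refine ⟨(hJ _).2 ⟨F₁, h1.1, F₂, h2.1, rfl⟩, fun τ hτ hsub => ?_⟩
  obtain ⟨σ₁, hσ₁, σ₂, hσ₂, rfl⟩ := (hJ τ).1 hτ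
  have e1 : F₁ = σ₁ := h1.2 σ₁ hσ₁
    (piece_left hdisj h1.1 hσ₂ ((Finset.subset_union_left).trans hsub))
  have e2 : F₂ = σ₂ := h2.2 σ₂ hσ₂
    (piece_right hdisj h2.1 hσ₁ ((Finset.subset_union_right).trans hsub))
  rw [e1, e2]

set_option linter.unusedSectionVars false in
include hdisj hJ in
lemma facet_decomp {C : Finset V} (h : IsFacet J C) :
    ∃ F₁ F₂, IsFacet Δ₁ F₁ ∧ IsFacet Δ₂ F₂ ∧ C = F₁ ∪ F₂ := by
  obtain ⟨σ₁, hσ₁, σ₂, hσ₂, rfl⟩ := (hJ C).1 h.1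
  obtain ⟨F₁, hF₁, hs₁⟩ := exists_facet Δ₁ hσ₁
  obtain ⟨F₂, hF₂, hs₂⟩ := exists_facet Δ₂ hσ₂
  exact ⟨F₁, F₂, hF₁, hF₂, h.2 (F₁ ∪ F₂) ((hJ _).2 ⟨F₁, hF₁.1, F₂, hF₂.1, rfl⟩)
    (Finset.union_subset_union hs₁ hs₂)⟩

include hdisj hJ in
lemma shellable_left (h₂ : Δ₂.faces.Nonempty) (hS : Shellable J) : Shellable Δ₁ := by
  obtain ⟨m, C, hCinj, hCfac, hCsurj, hCsh⟩ := hS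
  obtain ⟨σ0, hσ0⟩ := h₂
  obtain ⟨H, hHfac, -⟩ := exists_facet Δ₂ hσ0
  classical
  set T : Finset (Fin m) := Finset.univ.filter (fun k => H ⊆ C k) with hT
  have hmemT : ∀ k : Fin m, k ∈ T ↔ H ⊆ C k := by
    intro k; simp [hT]
  set e : Fin T.card ≃o {x // x ∈ T} := T.orderIsoOfFin rfl with he
  set D : Fin T.card → Finset V := fun j => C (e j) \ H with hD
  have hHe : ∀ j : Fin T.card, H ⊆ C (e j) := fun j => (hmemT _).1 (e j).2
  have key : ∀ k : Fin m, H ⊆ C k → IsFacet Δ₁ (C k \ H) ∧ C k = (C k \ H) ∪ H := by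
    intro k hk
    obtain ⟨F₁, F₂, hF₁, hF₂, hCk⟩ := facet_decomp hdisj hJ (hCfac k)
    have hdis : Disjoint F₁ H := hdisj F₁ hF₁.1 H hHfac.1
    have hHF₂ : H ⊆ F₂ := piece_right hdisj hHfac.1 hF₁.1 (hCk ▸ hk)
    have hHeq : H = F₂ := hHfac.2 F₂ hF₂.1 hHF₂
    subst hHeq
    have hsd : C k \ H = F₁ := by
      rw [hCk, Finset.union_sdiff_cancel_right hdis]
    rw [hsd]
    exact ⟨hF₁, by rw [hCk]⟩
  refine ⟨T.card, D, ?_, fun j => (key _ (hHe j)).1, ?_, ?_⟩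
  · -- injective
    intro j j' hjj'
    have : C (e j) = C (e j') := by
      rw [(key _ (hHe j)).2, (key _ (hHe j')).2]
      simp only [hD] at hjj'
      rw [hjj']
    exact e.injective (Subtype.coe_injective (hCinj this))
  · -- surjective onto facets
    intro F₁ hF₁
    obtain ⟨k, hk⟩ := hCsurj (F₁ ∪ H) (facet_union hdisj hJ hF₁ hHfac)
    have hkT : k ∈ T := (hmemT k).2 (hk ▸ Finset.subset_union_right)
    obtain ⟨j, hj⟩ := e.surjective ⟨k, hkT⟩
    refine ⟨j, ?_⟩
    have : (e j : Fin m) = k := by rw [hj]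
    rw [hD]
    simp only [this, hk]
    exact Finset.union_sdiff_cancel_right (hdisj F₁ hF₁.1 H hHfac.1)
  · -- shelling order
    intro j hj σ hσD ⟨j₀, hj₀lt, hσj₀⟩
    have hejlt : (e j₀ : Fin m) < (e j : Fin m) := by
      exact_mod_cast e.strictMono hj₀lt
    have hpos : 0 < ((e j : Fin m) : ℕ) :=
      Nat.lt_of_le_of_lt (Nat.zero_le _) hejlt
    have hσC : σ ∪ H ⊆ C (e j) :=
      Finset.union_subset (hσD.trans Finset.sdiff_subset) (hHe j)
    have hσC₀ : σ ∪ H ⊆ C (e j₀) :=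
      Finset.union_subset (hσj₀.trans Finset.sdiff_subset) (hHe j₀)
    obtain ⟨τ, hτC, ⟨l, hl, hτl⟩, hστ, hcard⟩ :=
      hCsh (e j) hpos (σ ∪ H) hσC ⟨e j₀, hejlt, hσC₀⟩
    have hHτ : H ⊆ τ := Finset.subset_union_right.trans hστ
    have hlT : l ∈ T := (hmemT l).2 (hHτ.trans hτl)
    obtain ⟨j₁, hej₁⟩ := e.surjective ⟨l, hlT⟩
    have hej₁' : (e j₁ : Fin m) = l := by rw [hej₁]
    have hj₁lt : j₁ < j := by
      rw [← e.lt_iff_lt, hej₁]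
      apply Subtype.coe_lt_coe.1
      simpa using hl
    refine ⟨τ \ H, Finset.sdiff_subset_sdiff hτC (le_refl _), ⟨j₁, hj₁lt, ?_⟩, ?_, ?_⟩
    · rw [hD]; simp only [hej₁']
      exact Finset.sdiff_subset_sdiff hτl (le_refl _)
    · intro x hx
      have hxτ : x ∈ τ := hστ (Finset.mem_union_left _ hx)
      have hxH : x ∉ H := (Finset.mem_sdiff.1 (hσD hx)).2
      exact Finset.mem_sdiff.2 ⟨hxτ, hxH⟩
    · have h1 : (τ \ H).card = τ.card - H.card := Finset.card_sdiff_of_subset hHτ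
      have h2 : (D j).card = (C (e j)).card - H.card := Finset.card_sdiff_of_subset (hHe j)
      have h3 : H.card ≤ τ.card := Finset.card_le_card hHτ
      have h4 : H.card ≤ (C (e j)).card := Finset.card_le_card (hHe j)
      omega

include hdisj hJ in
lemma shellable_join (h₂ : Δ₂.faces.Nonempty)
    (H1 : Shellable Δ₁) (H2 : Shellable Δ₂) : Shellable J := by
  classical
  obtain ⟨p, A, hAinj, hAfac, hAsurj, hAsh⟩ := H1
  obtain ⟨q, B, hBinj, hBfac, hBsurj, hBsh⟩ := H2
  have hq : 0 < q := by
    obtain ⟨σ0, hσ0⟩ := h₂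
    obtain ⟨F, hF, -⟩ := exists_facet Δ₂ hσ0
    obtain ⟨j, -⟩ := hBsurj F hF
    exact j.pos
  have hdivlt : ∀ k : Fin (p * q), (k : ℕ) / q < p := fun k =>
    (Nat.div_lt_iff_lt_mul hq).2 k.isLt
  set ia : Fin (p * q) → Fin p := fun k => ⟨(k : ℕ) / q, hdivlt k⟩ with hia
  set jb : Fin (p * q) → Fin q := fun k => ⟨(k : ℕ) % q, Nat.mod_lt _ hq⟩ with hjb
  set C : Fin (p * q) → Finset V := fun k => A (ia k) ∪ B (jb k) with hC
  have mkidx : ∀ (i : Fin p) (j : Fin q), ∃ k : Fin (p * q), ia k = i ∧ jb k = j := by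
    intro i j
    refine ⟨⟨q * (i : ℕ) + (j : ℕ), lt_mul_of i.isLt j.isLt⟩, ?_, ?_⟩
    · apply Fin.ext; simp [hia, div_of hq j.isLt]
    · apply Fin.ext; simp [hjb, mod_of j.isLt]
  have hksplit : ∀ k : Fin (p * q), (k : ℕ) = q * ((ia k) : ℕ) + ((jb k) : ℕ) := by
    intro k
    simp only [hia, hjb]
    exact (Nat.div_add_mod (k : ℕ) q).symm
  have hApos : ∀ i i' : Fin p, i' < i → 0 < (A i).card := by
    intro i i' hlt
    rcases Finset.eq_empty_or_nonempty (A i) with he | hne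
    · exfalso
      have heq : A i = A i' :=
        (hAfac i).2 (A i') (hAfac i').1 (by rw [he]; exact Finset.empty_subset _)
      exact absurd (hAinj heq) (ne_of_gt hlt)
    · exact Finset.card_pos.2 hne
  have hBpos : ∀ j j' : Fin q, j' < j → 0 < (B j).card := by
    intro j j' hlt
    rcases Finset.eq_empty_or_nonempty (B j) with he | hne
    · exfalso
      have heq : B j = B j' :=
        (hBfac j).2 (B j') (hBfac j').1 (by rw [he]; exact Finset.empty_subset _)
      exact absurd (hBinj heq) (ne_of_gt hlt)
    · exact Finset.card_pos.2 hne
  have hdisjAB : ∀ (i : Fin p) (j : Fin q), Disjoint (A i) (B j) := fun i j =>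
    hdisj _ (hAfac i).1 _ (hBfac j).1
  refine ⟨p * q, C, ?_, ?_, ?_, ?_⟩
  · -- injective
    intro k k' hkk'
    simp only [hC] at hkk'
    have hA1 : A (ia k) ⊆ A (ia k') :=
      piece_left hdisj (hAfac _).1 (hBfac (jb k')).1
        (hkk' ▸ (Finset.subset_union_left : A (ia k) ⊆ A (ia k) ∪ B (jb k)))
    have hAeq : ia k = ia k' := hAinj ((hAfac _).2 _ (hAfac _).1 hA1)
    have hB1 : B (jb k) ⊆ B (jb k') :=
      piece_right hdisj (hBfac _).1 (hAfac (ia k')).1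
        (hkk' ▸ (Finset.subset_union_right : B (jb k) ⊆ A (ia k) ∪ B (jb k)))
    have hBeq : jb k = jb k' := hBinj ((hBfac _).2 _ (hBfac _).1 hB1)
    apply Fin.ext
    have e1 : ((ia k) : ℕ) = ((ia k') : ℕ) := congrArg _ hAeq
    have e2 : ((jb k) : ℕ) = ((jb k') : ℕ) := congrArg _ hBeq
    have s1 := hksplit k
    have s2 := hksplit k'
    rw [e1, e2] at s1
    omega
  · exact fun k => facet_union hdisj hJ (hAfac _) (hBfac _)
  · intro σ hσ
    obtain ⟨F₁, F₂, hF₁, hF₂, rfl⟩ := facet_decomp hdisj hJ hσ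
    obtain ⟨i, hi⟩ := hAsurj F₁ hF₁
    obtain ⟨j, hj⟩ := hBsurj F₂ hF₂
    obtain ⟨k, hka, hkb⟩ := mkidx i j
    exact ⟨k, by rw [hC]; simp only [hka, hkb, hi, hj]⟩
  · -- shelling order
    intro k hk σ hσsub hex
    obtain ⟨k', hk'lt, hσk'⟩ := hex
    simp only [hC] at hσsub hσk'
    have hσ1 : σ ∩ A (ia k) ∈ Δ₁.faces :=
      Δ₁.down_closed _ (hAfac _).1 _ Finset.inter_subset_right
    have hσ2 : σ ∩ B (jb k) ∈ Δ₂.faces :=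
      Δ₂.down_closed _ (hBfac _).1 _ Finset.inter_subset_right
    have hσeq : σ = (σ ∩ A (ia k)) ∪ (σ ∩ B (jb k)) := by
      rw [← Finset.inter_union_distrib_left]
      exact (Finset.inter_eq_left.2 hσsub).symm
    have hσ1sub : σ ∩ A (ia k) ⊆ A (ia k') :=
      piece_left hdisj hσ1 (hBfac (jb k')).1 ((Finset.inter_subset_left).trans hσk')
    have hσ2sub : σ ∩ B (jb k) ⊆ B (jb k') :=
      piece_right hdisj hσ2 (hAfac (ia k')).1 ((Finset.inter_subset_left).trans hσk')
    have hlex := (lex_lt (jb k).isLt (jb k').isLt).1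
      (by rw [← hksplit k, ← hksplit k']; exact hk'lt)
    rcases hlex with hcase | ⟨hieq, hjlt⟩
    · -- earlier in first coordinate
      have hposk : 0 < ((ia k) : ℕ) := lt_of_le_of_lt (Nat.zero_le _) hcase
      obtain ⟨τ₁, hτ₁A, ⟨i'', hi''lt, hτ₁i''⟩, hστ₁, hcard₁⟩ :=
        hAsh (ia k) hposk (σ ∩ A (ia k)) Finset.inter_subset_right
          ⟨ia k', hcase, hσ1sub⟩
      obtain ⟨k'', hk''a, hk''b⟩ := mkidx i'' (jb k)
      refine ⟨τ₁ ∪ B (jb k), ?_, ⟨k'', ?_, ?_⟩, ?_, ?_⟩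
      · rw [hC]
        exact Finset.union_subset_union hτ₁A (le_refl _)
      · rw [Fin.lt_def, hksplit k'', hksplit k, hk''a, hk''b]
        exact (lex_lt (jb k).isLt (jb k).isLt).2 (Or.inl hi''lt)
      · rw [hC]
        simp only [hk''a, hk''b]
        exact Finset.union_subset_union hτ₁i'' (le_refl _)
      · nth_rewrite 1 [hσeq]
        exact Finset.union_subset_union hστ₁ Finset.inter_subset_right
      · have hd1 : Disjoint τ₁ (B (jb k)) :=
          hdisj τ₁ (Δ₁.down_closed _ (hAfac _).1 _ hτ₁A) _ (hBfac _).1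
        rw [hC]
        rw [Finset.card_union_of_disjoint hd1,
          Finset.card_union_of_disjoint (hdisjAB _ _), hcard₁]
        have := hApos (ia k) (ia k') hcase
        omega
    · -- earlier in second coordinate
      have hposj : 0 < ((jb k) : ℕ) := lt_of_le_of_lt (Nat.zero_le _) hjlt
      obtain ⟨τ₂, hτ₂B, ⟨j'', hj''lt, hτ₂j''⟩, hστ₂, hcard₂⟩ :=
        hBsh (jb k) hposj (σ ∩ B (jb k)) Finset.inter_subset_right
          ⟨jb k', hjlt, hσ2sub⟩
      obtain ⟨k'', hk''a, hk''b⟩ := mkidx (ia k) j''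
      refine ⟨A (ia k) ∪ τ₂, ?_, ⟨k'', ?_, ?_⟩, ?_, ?_⟩
      · rw [hC]
        exact Finset.union_subset_union (le_refl _) hτ₂B
      · rw [Fin.lt_def, hksplit k'', hksplit k, hk''a, hk''b]
        exact (lex_lt (jb k).isLt j''.isLt).2 (Or.inr ⟨rfl, hj''lt⟩)
      · rw [hC]
        simp only [hk''a, hk''b]
        exact Finset.union_subset_union (le_refl _) hτ₂j''
      · nth_rewrite 1 [hσeq]
        exact Finset.union_subset_union Finset.inter_subset_right hστ₂
      · have hd2 : Disjoint (A (ia k)) τ₂ :=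
          hdisj _ (hAfac _).1 τ₂ (Δ₂.down_closed _ (hBfac _).1 _ hτ₂B)
        rw [hC]
        rw [Finset.card_union_of_disjoint hd2,
          Finset.card_union_of_disjoint (hdisjAB _ _), hcard₂]
        have := hBpos (jb k) (jb k') hjlt
        omega

end Pieces

end JoinShellAux

/-- The simplicial join of two finite nonempty complexes on disjoint vertex sets is
shellable iff both factors are shellable. -/
theorem join_shellable_iff {V : Type} [DecidableEq V] (Δ₁ Δ₂ J : SimpComplex V)
    (h₁ : Δ₁.faces.Nonempty) (h₂ : Δ₂.faces.Nonempty)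
    (hdisj : ∀ σ₁ ∈ Δ₁.faces, ∀ σ₂ ∈ Δ₂.faces, Disjoint σ₁ σ₂)
    (hJ : ∀ σ, σ ∈ J.faces ↔ ∃ σ₁ ∈ Δ₁.faces, ∃ σ₂ ∈ Δ₂.faces, σ = σ₁ ∪ σ₂) :
    Shellable J ↔ (Shellable Δ₁ ∧ Shellable Δ₂) := by
  have hdisj' : ∀ σ₂ ∈ Δ₂.faces, ∀ σ₁ ∈ Δ₁.faces, Disjoint σ₂ σ₁ :=
    fun a ha b hb => (hdisj b hb a ha).symm
  have hJ' : ∀ σ, σ ∈ J.faces ↔ ∃ σ₂ ∈ Δ₂.faces, ∃ σ₁ ∈ Δ₁.faces, σ = σ₂ ∪ σ₁ := by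
    intro σ
    rw [hJ]
    constructor
    · rintro ⟨a, ha, b, hb, rfl⟩; exact ⟨b, hb, a, ha, Finset.union_comm a b⟩
    · rintro ⟨a, ha, b, hb, rfl⟩; exact ⟨b, hb, a, ha, Finset.union_comm a b⟩
  constructor
  · intro h
    exact ⟨JoinShellAux.shellable_left hdisj hJ h₂ h,
      JoinShellAux.shellable_left hdisj' hJ' h₁ h⟩
  · rintro ⟨a, b⟩
    exact JoinShellAux.shellable_join hdisj hJ h₂ a b
end

section
/- The simplicial complex of sets of pairwise non-crossing diagonals of a convex n-gon (n ≥ 4) is a pure simplicial complex: every maximal face has exactly n − 3 elements. -/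
/-- `x` lies strictly between `a` and `b` going counterclockwise from `a` to `b`. -/
def btwn (n : ℕ) (a x b : ZMod n) : Prop :=
  0 < (x - a).val ∧ (x - a).val < (b - a).val

/-- A diagonal of the `n`-gon: a pair of distinct, non-adjacent vertices. -/
def IsDiagonal (n : ℕ) (e : Finset (ZMod n)) : Prop :=
  ∃ a b : ZMod n, e = {a, b} ∧ a ≠ b ∧ b - a ≠ 1 ∧ a - b ≠ 1

/-- Two diagonals cross if their endpoints strictly interleave in cyclic order. -/
def Crosses (n : ℕ) (e f : Finset (ZMod n)) : Prop :=
  ∃ a b c d : ZMod n, e = {a, b} ∧ f = {c, d} ∧ btwn n a c b ∧ btwn n b d a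

/-- A set of pairwise non-crossing diagonals. -/
def NonCrossing (n : ℕ) (T : Finset (Finset (ZMod n))) : Prop :=
  (∀ e ∈ T, IsDiagonal n e) ∧ ∀ e ∈ T, ∀ f ∈ T, ¬ Crosses n e f

/-- A triangulation: a maximal set of pairwise non-crossing diagonals. -/
def IsPolyTriangulation (n : ℕ) (T : Finset (Finset (ZMod n))) : Prop :=
  NonCrossing n T ∧
  ∀ e, IsDiagonal n e → (∀ f ∈ T, ¬ Crosses n e f ∧ ¬ Crosses n f e) → e ∈ T

lemma finset_pair_eq {α : Type} [DecidableEq α] {a b c d : α}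
    (h : ({a,b} : Finset α) = {c,d}) :
    (a = c ∧ b = d) ∨ (a = d ∧ b = c) := by
  have h1 : a ∈ ({c,d} : Finset α) := h ▸ Finset.mem_insert_self a {b}
  have h2 : b ∈ ({c,d} : Finset α) := h ▸ Finset.mem_insert_of_mem (Finset.mem_singleton_self b)
  have h3 : c ∈ ({a,b} : Finset α) := h.symm ▸ Finset.mem_insert_self c {d}
  have h4 : d ∈ ({a,b} : Finset α) := h.symm ▸ Finset.mem_insert_of_mem (Finset.mem_singleton_self d)
  simp only [Finset.mem_insert, Finset.mem_singleton] at h1 h2 h3 h4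
  tauto

lemma vsub_val (n : ℕ) [NeZero n] (a x : ZMod n) :
    (x - a).val = if a.val ≤ x.val then x.val - a.val else x.val + n - a.val := by
  have hx : x.val < n := ZMod.val_lt x
  have ha : a.val < n := ZMod.val_lt a
  have h1 : x - a = ((x.val + n - a.val : ℕ) : ZMod n) := by
    push_cast [Nat.cast_sub (by omega : a.val ≤ x.val + n)]
    simp [ZMod.natCast_val, ZMod.natCast_self]
  rw [h1, ZMod.val_natCast]
  split_ifs with h
  · have : x.val + n - a.val = (x.val - a.val) + n := by omega
    rw [this, Nat.add_mod_right, Nat.mod_eq_of_lt (by omega)]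
  · exact Nat.mod_eq_of_lt (by omega)

lemma btwn_iff (n : ℕ) [NeZero n] (a x b : ZMod n) :
    btwn n a x b ↔
      (0 < (if a.val ≤ x.val then x.val - a.val else x.val + n - a.val) ∧
       (if a.val ≤ x.val then x.val - a.val else x.val + n - a.val) <
       (if a.val ≤ b.val then b.val - a.val else b.val + n - a.val)) := by
  rw [btwn, vsub_val, vsub_val]

def Cross2 (p q : ℕ × ℕ) : Prop := p.1 < q.1 ∧ q.1 < p.2 ∧ p.2 < q.2

lemma crosses_iff (n : ℕ) [NeZero n] {a b c d : ZMod n}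
    (hab : a.val < b.val) (hcd : c.val < d.val) :
    Crosses n {a,b} {c,d} ↔
      Cross2 (a.val, b.val) (c.val, d.val) ∨ Cross2 (c.val, d.val) (a.val, b.val) := by
  have hva : a.val < n := ZMod.val_lt a
  have hvb : b.val < n := ZMod.val_lt b
  have hvc : c.val < n := ZMod.val_lt c
  have hvd : d.val < n := ZMod.val_lt d
  constructor
  · rintro ⟨a', b', c', d', he, hf, h1, h2⟩
    rw [btwn_iff] at h1 h2
    rcases finset_pair_eq he with ⟨rfl, rfl⟩ | ⟨rfl, rfl⟩ <;>
      rcases finset_pair_eq hf with ⟨rfl, rfl⟩ | ⟨rfl, rfl⟩ <;>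
      simp only [Cross2] <;> split_ifs at h1 h2 <;> omega
  · rintro (⟨h1, h2, h3⟩ | ⟨h1, h2, h3⟩)
    · exact ⟨a, b, c, d, rfl, rfl,
        by rw [btwn_iff]; split_ifs <;> omega,
        by rw [btwn_iff]; split_ifs <;> omega⟩
    · exact ⟨a, b, d, c, rfl, Finset.pair_comm c d,
        by rw [btwn_iff]; split_ifs <;> omega,
        by rw [btwn_iff]; split_ifs <;> omega⟩

lemma core_count : ∀ k a b : ℕ, b - a ≤ k → a + 2 ≤ b →
    ∀ S : Finset (ℕ × ℕ),
    (∀ p ∈ S, a ≤ p.1 ∧ p.1 + 2 ≤ p.2 ∧ p.2 ≤ b ∧ p ≠ (a, b)) →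
    (∀ p ∈ S, ∀ q ∈ S, ¬ Cross2 p q) →
    (∀ p : ℕ × ℕ, a ≤ p.1 → p.1 + 2 ≤ p.2 → p.2 ≤ b → p ≠ (a, b) →
      (∀ q ∈ S, ¬ Cross2 p q ∧ ¬ Cross2 q p) → p ∈ S) →
    S.card = b - a - 2 := by
  intro k
  induction k with
  | zero => intro a b hk h2 S _ _ _; omega
  | succ k IH =>
    intro a b hk h2 S hb hl hm
    by_cases hbase : b ≤ a + 2
    · -- b = a + 2, S must be empty
      have hS : S = ∅ := by
        apply Finset.eq_empty_of_forall_notMem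
        intro p hp
        obtain ⟨h1, h3, h4, h5⟩ := hb p hp
        apply h5
        have : p.1 = a ∧ p.2 = b := by omega
        exact Prod.ext this.1 this.2
      rw [hS]; simp; omega
    push_neg at hbase  -- a + 2 < b
    -- define c
    set C : Finset ℕ := insert (a+1) ((S.filter (fun p => p.1 = a)).image Prod.snd) with hC
    have hCne : C.Nonempty := ⟨a+1, Finset.mem_insert_self _ _⟩
    set c : ℕ := C.max' hCne with hcdef
    have hc1 : a + 1 ≤ c := Finset.le_max' C _ (Finset.mem_insert_self _ _)
    have hc2 : ∀ p ∈ S, p.1 = a → p.2 ≤ c := by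
      intro p hp hpa
      exact Finset.le_max' C _ (Finset.mem_insert_of_mem
        (Finset.mem_image_of_mem _ (Finset.mem_filter.mpr ⟨hp, hpa⟩)))
    have hc3 : c = a + 1 ∨ (a, c) ∈ S := by
      have := Finset.max'_mem C hCne
      rw [← hcdef] at this
      rcases Finset.mem_insert.mp this with h | h
      · exact Or.inl h
      · right
        obtain ⟨p, hp, hpc⟩ := Finset.mem_image.mp h
        obtain ⟨hpS, hpa⟩ := Finset.mem_filter.mp hp
        have : p = (a, c) := Prod.ext hpa hpc
        rwa [← this]
    have hc4 : c < b := by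
      rcases hc3 with h | h
      · omega
      · obtain ⟨_, _, h4, h5⟩ := hb _ h
        have : c ≠ b := fun hh => h5 (by rw [hh])
        simp at h4; omega
    have hacS : a + 2 ≤ c → (a, c) ∈ S := by
      intro h; rcases hc3 with h' | h'
      · omega
      · exact h'
    have hacS' : (a, c) ∈ S → a + 2 ≤ c := fun h => (hb _ h).2.1
    -- split lemma
    have hsplit : ∀ p ∈ S, p.2 ≤ c ∨ c ≤ p.1 := by
      intro p hp
      by_cases he : c ≤ p.1
      · exact Or.inr he
      push_neg at he
      left
      by_contra hf
      push_neg at hf  -- c < p.2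
      obtain ⟨hp1, hp2, hp3, hp4⟩ := hb p hp
      rcases Nat.eq_or_lt_of_le hp1 with h | h
      · exact absurd (hc2 p hp h.symm) (by omega)
      · have hac : (a, c) ∈ S := hacS (by omega)
        exact hl _ hac _ hp ⟨h, he, hf⟩
    have hcbS : c + 2 ≤ b → (c, b) ∈ S := by
      intro h
      apply hm (c, b) (by omega) (by simpa using h) le_rfl
        (by intro hh; have := congrArg Prod.fst hh; simp at this; omega)
      intro q hq
      obtain ⟨hq1, hq2, hq3, hq4⟩ := hb q hq
      constructor
      · rintro ⟨_, _, h3⟩; simp at h3; omega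
      · rintro ⟨g1, g2, g3⟩
        simp at g1 g2 g3
        rcases hsplit q hq with h' | h' <;> omega
    have hcbS' : (c, b) ∈ S → c + 2 ≤ b := fun h => by
      have := (hb _ h).2.1; simpa using this
    -- the two sub-families
    set S₁ : Finset (ℕ × ℕ) := S.filter (fun p => p.2 ≤ c ∧ p ≠ (a, c)) with hS₁
    set S₂ : Finset (ℕ × ℕ) := S.filter (fun p => c ≤ p.1 ∧ p ≠ (c, b)) with hS₂
    have hS₁card : S₁.card = c - a - 2 := by
      by_cases h : a + 2 ≤ c
      · apply IH a c (by omega) h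
        · intro p hp
          obtain ⟨hpS, hpc, hpne⟩ := Finset.mem_filter.mp hp
          obtain ⟨g1, g2, g3, g4⟩ := hb p hpS
          exact ⟨g1, g2, hpc, hpne⟩
        · intro p hp q hq
          exact hl p (Finset.mem_filter.mp hp).1 q (Finset.mem_filter.mp hq).1
        · intro p g1 g2 g3 g4 hnc
          apply Finset.mem_filter.mpr
          refine ⟨?_, g3, g4⟩
          apply hm p g1 g2 (by omega)
            (by intro hh; have := congrArg Prod.snd hh; simp at this; omega)
          intro q hq
          rcases hsplit q hq with h' | h'
          · by_cases hqac : q = (a, c)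
            · subst hqac
              constructor
              · rintro ⟨u1, _, _⟩; simp at u1; omega
              · rintro ⟨_, _, u3⟩; simp at u3; omega
            · exact hnc q (Finset.mem_filter.mpr ⟨hq, h', hqac⟩)
          · obtain ⟨w1, w2, w3, w4⟩ := hb q hq
            constructor
            · rintro ⟨u1, u2, u3⟩; omega
            · rintro ⟨u1, u2, u3⟩; omega
      · have : S₁ = ∅ := by
          apply Finset.eq_empty_of_forall_notMem
          intro p hp
          obtain ⟨hpS, hpc, hpne⟩ := Finset.mem_filter.mp hp
          obtain ⟨g1, g2, g3, g4⟩ := hb p hpS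
          omega
        rw [this]; simp; omega
    have hS₂card : S₂.card = b - c - 2 := by
      by_cases h : c + 2 ≤ b
      · apply IH c b (by omega) h
        · intro p hp
          obtain ⟨hpS, hpc, hpne⟩ := Finset.mem_filter.mp hp
          obtain ⟨g1, g2, g3, g4⟩ := hb p hpS
          exact ⟨hpc, g2, g3, hpne⟩
        · intro p hp q hq
          exact hl p (Finset.mem_filter.mp hp).1 q (Finset.mem_filter.mp hq).1
        · intro p g1 g2 g3 g4 hnc
          apply Finset.mem_filter.mpr
          refine ⟨?_, g1, g4⟩
          apply hm p (by omega) g2 g3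
            (by intro hh; have := congrArg Prod.fst hh; simp at this; omega)
          intro q hq
          rcases hsplit q hq with h' | h'
          · obtain ⟨w1, w2, w3, w4⟩ := hb q hq
            constructor
            · rintro ⟨u1, u2, u3⟩; omega
            · rintro ⟨u1, u2, u3⟩; omega
          · by_cases hqcb : q = (c, b)
            · subst hqcb
              constructor
              · rintro ⟨u1, _, _⟩; simp at u1; omega
              · rintro ⟨_, _, u3⟩; simp at u3; omega
            · exact hnc q (Finset.mem_filter.mpr ⟨hq, h', hqcb⟩)
      · have : S₂ = ∅ := by
          apply Finset.eq_empty_of_forall_notMem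
          intro p hp
          obtain ⟨hpS, hpc, hpne⟩ := Finset.mem_filter.mp hp
          obtain ⟨g1, g2, g3, g4⟩ := hb p hpS
          have : p ≠ (c, b) := hpne
          have h5 : p.1 = c ∧ p.2 = b → False := fun ⟨u, v⟩ => this (Prod.ext u v)
          omega
        rw [this]; simp; omega
    -- partition
    have hdisj : Disjoint S₁ S₂ := by
      rw [Finset.disjoint_left]
      intro p hp1 hp2
      obtain ⟨hpS, u1, _⟩ := Finset.mem_filter.mp hp1
      obtain ⟨_, u2, _⟩ := Finset.mem_filter.mp hp2
      have := (hb p hpS).2.1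
      omega
    have hunion : S₁ ∪ S₂ = S.filter (fun p => p ≠ (a, c) ∧ p ≠ (c, b)) := by
      ext p
      simp only [Finset.mem_union, Finset.mem_filter, hS₁, hS₂]
      constructor
      · rintro (⟨hpS, u1, u2⟩ | ⟨hpS, u1, u2⟩)
        · refine ⟨hpS, u2, ?_⟩
          intro hh; rw [hh] at u1; simp at u1; omega
        · refine ⟨hpS, ?_, u2⟩
          intro hh; rw [hh] at u1; simp at u1; omega
      · rintro ⟨hpS, u1, u2⟩
        rcases hsplit p hpS with h' | h'
        · exact Or.inl ⟨hpS, h', u1⟩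
        · exact Or.inr ⟨hpS, h', u2⟩
    have hrest : (S.filter (fun p => ¬(p ≠ (a, c) ∧ p ≠ (c, b)))).card =
        (if a + 2 ≤ c then 1 else 0) + (if c + 2 ≤ b then 1 else 0) := by
      have hne : (a, c) ≠ (c, b) := by
        intro hh; have := congrArg Prod.fst hh; simp at this; omega
      have hmem : ∀ p, p ∈ S.filter (fun p => ¬(p ≠ (a, c) ∧ p ≠ (c, b))) ↔
          (p ∈ S ∧ (p = (a, c) ∨ p = (c, b))) := by
        intro p; simp only [Finset.mem_filter]; tauto
      by_cases h1 : a + 2 ≤ c <;> by_cases h2 : c + 2 ≤ b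
      · have : S.filter (fun p => ¬(p ≠ (a, c) ∧ p ≠ (c, b))) = {(a, c), (c, b)} := by
          ext p
          rw [hmem]
          simp only [Finset.mem_insert, Finset.mem_singleton]
          constructor
          · exact fun h => h.2
          · rintro (rfl | rfl)
            exacts [⟨hacS h1, Or.inl rfl⟩, ⟨hcbS h2, Or.inr rfl⟩]
        rw [this]
        rw [Finset.card_insert_of_notMem (by simpa using hne), Finset.card_singleton]
        simp [h1, h2]
      · have : S.filter (fun p => ¬(p ≠ (a, c) ∧ p ≠ (c, b))) = {(a, c)} := by
          ext p
          rw [hmem]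
          simp only [Finset.mem_singleton]
          constructor
          · rintro ⟨hpS, rfl | rfl⟩
            · rfl
            · exact absurd (hcbS' hpS) h2
          · rintro rfl; exact ⟨hacS h1, Or.inl rfl⟩
        rw [this]; simp [h1, h2]
      · have : S.filter (fun p => ¬(p ≠ (a, c) ∧ p ≠ (c, b))) = {(c, b)} := by
          ext p
          rw [hmem]
          simp only [Finset.mem_singleton]
          constructor
          · rintro ⟨hpS, rfl | rfl⟩
            · exact absurd (hacS' hpS) h1
            · rfl
          · rintro rfl; exact ⟨hcbS h2, Or.inr rfl⟩
        rw [this]; simp [h1, h2]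
      · omega
    have htotal := Finset.card_filter_add_card_filter_not
      (s := S) (p := fun p => p ≠ (a, c) ∧ p ≠ (c, b))
    rw [← hunion] at htotal
    rw [Finset.card_union_of_disjoint hdisj] at htotal
    rw [hS₁card, hS₂card, hrest] at htotal
    by_cases h1 : a + 2 ≤ c <;> by_cases h2 : c + 2 ≤ b <;> simp [h1, h2] at htotal <;> omega

lemma val_eq_one {n : ℕ} [NeZero n] (hn : 1 < n) {x : ZMod n} (h : x.val = 1) : x = 1 := by
  have : ((x.val : ℕ) : ZMod n) = x := ZMod.natCast_rightInverse x
  rw [h] at this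
  simpa using this.symm

lemma diag_rep {n : ℕ} (hn : 4 ≤ n) {e : Finset (ZMod n)} (he : IsDiagonal n e) :
    haveI : NeZero n := ⟨by omega⟩
    ∃ a b : ZMod n, e = {a, b} ∧ a.val + 2 ≤ b.val ∧ b.val ≤ n - 1 ∧
      ¬(a.val = 0 ∧ b.val = n - 1) := by
  haveI : NeZero n := ⟨by omega⟩
  obtain ⟨a, b, he, hab, h1, h2⟩ := he
  have hv : a.val ≠ b.val := fun h => hab (ZMod.val_injective n h)
  have hva : a.val < n := ZMod.val_lt a
  have hvb : b.val < n := ZMod.val_lt b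
  -- wlog a.val < b.val
  rcases lt_or_gt_of_ne hv with hlt | hlt
  · refine ⟨a, b, he, ?_, by omega, ?_⟩
    · have h3 : (b - a).val ≠ 1 := fun h => h1 (val_eq_one (by omega) h)
      rw [vsub_val] at h3
      rw [if_pos hlt.le] at h3
      omega
    · have h4 : (a - b).val ≠ 1 := fun h => h2 (val_eq_one (by omega) h)
      rw [vsub_val] at h4
      rw [if_neg (by omega)] at h4
      omega
  · refine ⟨b, a, by rw [he, Finset.pair_comm], ?_, by omega, ?_⟩
    · have h4 : (a - b).val ≠ 1 := fun h => h2 (val_eq_one (by omega) h)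
      rw [vsub_val] at h4
      rw [if_pos hlt.le] at h4
      omega
    · have h3 : (b - a).val ≠ 1 := fun h => h1 (val_eq_one (by omega) h)
      rw [vsub_val] at h3
      rw [if_neg (by omega)] at h3
      omega

lemma mk_diag {n : ℕ} (hn : 4 ≤ n) {p q : ℕ} (h1 : p + 2 ≤ q) (h2 : q ≤ n - 1)
    (h3 : ¬(p = 0 ∧ q = n - 1)) :
    haveI : NeZero n := ⟨by omega⟩
    IsDiagonal n {(p : ZMod n), (q : ZMod n)} ∧
      ((p : ZMod n)).val = p ∧ ((q : ZMod n)).val = q := by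
  haveI : NeZero n := ⟨by omega⟩
  have hvp : ((p : ZMod n)).val = p := ZMod.val_cast_of_lt (by omega)
  have hvq : ((q : ZMod n)).val = q := ZMod.val_cast_of_lt (by omega)
  refine ⟨⟨(p : ZMod n), (q : ZMod n), rfl, ?_, ?_, ?_⟩, hvp, hvq⟩
  · intro h; rw [← hvp, ← hvq, h] at h1; omega
  · intro h
    have := congrArg ZMod.val h
    rw [vsub_val, ZMod.val_one_eq_one_mod] at this
    rw [hvp, hvq, if_pos (by omega), Nat.mod_eq_of_lt (by omega)] at this
    omega
  · intro h
    have := congrArg ZMod.val h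
    rw [vsub_val, ZMod.val_one_eq_one_mod] at this
    rw [hvp, hvq, if_neg (by omega), Nat.mod_eq_of_lt (by omega)] at this
    omega

/-- The complex of non-crossing diagonal sets of the convex `n`-gon (`n ≥ 4`) is pure:
every maximal face (triangulation) has exactly `n - 3` elements. -/
theorem polygon_complex_pure (n : ℕ) (hn : 4 ≤ n)
    (T : Finset (Finset (ZMod n))) (hT : IsPolyTriangulation n T) :
    T.card = n - 3 := by
  haveI : NeZero n := ⟨by omega⟩
  obtain ⟨⟨hdiag, hnc⟩, hmax⟩ := hT
  set g : Finset (ZMod n) → ℕ × ℕ :=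
    fun e => (e.sum (fun x => x.val) - e.sup (fun x => x.val), e.sup (fun x => x.val)) with hg
  have hgpair : ∀ a b : ZMod n, a.val < b.val → g {a, b} = (a.val, b.val) := by
    intro a b h
    have hne : a ≠ b := fun hh => by rw [hh] at h; omega
    have hsup : ({a, b} : Finset (ZMod n)).sup (fun x => x.val) = b.val := by
      simp only [Finset.sup_insert, Finset.sup_singleton]
      exact sup_eq_right.mpr h.le
    have hsum : ({a, b} : Finset (ZMod n)).sum (fun x => x.val) = a.val + b.val :=
      Finset.sum_pair hne
    rw [hg]
    simp only [hsup, hsum]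
    exact Prod.ext (by omega) rfl
  -- representatives
  have hrep : ∀ e ∈ T, ∃ a b : ZMod n, e = {a, b} ∧ a.val + 2 ≤ b.val ∧
      b.val ≤ n - 1 ∧ ¬(a.val = 0 ∧ b.val = n - 1) ∧ g e = (a.val, b.val) := by
    intro e he
    obtain ⟨a, b, h1, h2, h3, h4⟩ := diag_rep hn (hdiag e he)
    exact ⟨a, b, h1, h2, h3, h4, by rw [h1]; exact hgpair a b (by omega)⟩
  set S : Finset (ℕ × ℕ) := T.image g with hS
  have hcard : S.card = T.card := by
    apply Finset.card_image_of_injOn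
    intro e he f hf hgef
    obtain ⟨a, b, he1, _, _, _, he2⟩ := hrep e he
    obtain ⟨c, d, hf1, _, _, _, hf2⟩ := hrep f hf
    rw [he2, hf2] at hgef
    have h1 : a.val = c.val := congrArg Prod.fst hgef
    have h2 : b.val = d.val := congrArg Prod.snd hgef
    rw [he1, hf1, ZMod.val_injective n h1, ZMod.val_injective n h2]
  have hSb : ∀ p ∈ S, 0 ≤ p.1 ∧ p.1 + 2 ≤ p.2 ∧ p.2 ≤ n - 1 ∧ p ≠ (0, n - 1) := by
    intro p hp
    obtain ⟨e, he, hge⟩ := Finset.mem_image.mp hp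
    obtain ⟨a, b, _, h2, h3, h4, h5⟩ := hrep e he
    rw [← hge, h5]
    refine ⟨Nat.zero_le _, h2, h3, ?_⟩
    intro hh
    exact h4 ⟨congrArg Prod.fst hh, congrArg Prod.snd hh⟩
  have hSl : ∀ p ∈ S, ∀ q ∈ S, ¬ Cross2 p q := by
    intro p hp q hq hcross
    obtain ⟨e, he, hge⟩ := Finset.mem_image.mp hp
    obtain ⟨f, hf, hgf⟩ := Finset.mem_image.mp hq
    obtain ⟨a, b, he1, he2, _, _, he5⟩ := hrep e he
    obtain ⟨c, d, hf1, hf2, _, _, hf5⟩ := hrep f hf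
    apply hnc e he f hf
    rw [he1, hf1, crosses_iff n (by omega) (by omega)]
    left
    rw [← hge, he5, ← hgf, hf5] at hcross
    exact hcross
  have hSm : ∀ p : ℕ × ℕ, 0 ≤ p.1 → p.1 + 2 ≤ p.2 → p.2 ≤ n - 1 → p ≠ (0, n - 1) →
      (∀ q ∈ S, ¬ Cross2 p q ∧ ¬ Cross2 q p) → p ∈ S := by
    intro p _ h2 h3 h4 hncp
    have h4' : ¬(p.1 = 0 ∧ p.2 = n - 1) := fun ⟨u, v⟩ => h4 (Prod.ext u v)
    obtain ⟨hdiag', hvp, hvq⟩ := mk_diag hn h2 h3 h4'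
    have hmem : ({(p.1 : ZMod n), (p.2 : ZMod n)} : Finset (ZMod n)) ∈ T := by
      apply hmax _ hdiag'
      intro f hf
      obtain ⟨c, d, hf1, hf2, _, _, hf5⟩ := hrep f hf
      have hqS : (c.val, d.val) ∈ S := by
        rw [← hf5]; exact Finset.mem_image_of_mem g hf
      obtain ⟨hnc1, hnc2⟩ := hncp _ hqS
      constructor
      · rw [hf1, crosses_iff n (by omega : ((p.1 : ZMod n)).val < ((p.2 : ZMod n)).val)
          (by omega)]
        rw [hvp, hvq]
        rintro (h | h)
        · exact hnc1 (by rwa [show ((p.1 : ℕ), (p.2 : ℕ)) = p from rfl] at h)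
        · exact hnc2 (by rwa [show ((p.1 : ℕ), (p.2 : ℕ)) = p from rfl] at h)
      · rw [hf1, crosses_iff n (by omega : c.val < d.val)
          (by rw [hvp, hvq]; omega)]
        rw [hvp, hvq]
        rintro (h | h)
        · exact hnc2 (by rwa [show ((p.1 : ℕ), (p.2 : ℕ)) = p from rfl] at h)
        · exact hnc1 (by rwa [show ((p.1 : ℕ), (p.2 : ℕ)) = p from rfl] at h)
    have : g {(p.1 : ZMod n), (p.2 : ZMod n)} = p := by
      rw [hgpair _ _ (by rw [hvp, hvq]; omega), hvp, hvq]
    rw [← this]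
    exact Finset.mem_image_of_mem g hmem
  have := core_count (n - 1) 0 (n - 1) (by omega) (by omega) S hSb hSl hSm
  omega
end

section
/- In the complex of non-crossing diagonal sets of a convex n-gon (n ≥ 4), every face of codimension 1 (i.e., every set of n − 4 pairwise non-crossing diagonals) is contained in exactly two triangulations; equivalently, in any triangulation each diagonal admits a unique flip. -/
namespace Poly

lemma pair_cases {α : Type*} [DecidableEq α] {a b c d : α} (h : ({a,b} : Finset α) = {c,d}) :
    (a = c ∧ b = d) ∨ (a = d ∧ b = c) := by
  have ha : a ∈ ({c,d} : Finset α) := h ▸ (by simp)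
  have hb : b ∈ ({c,d} : Finset α) := h ▸ (by simp)
  have hc : c ∈ ({a,b} : Finset α) := h ▸ (by simp)
  have hd : d ∈ ({a,b} : Finset α) := h ▸ (by simp)
  simp at ha hb hc hd
  tauto

variable {n : ℕ}

lemma cast_inj (hn : 0 < n) {i j : ℕ} (hi : i < n) (hj : j < n) :
    (i : ZMod n) = (j : ZMod n) ↔ i = j := by
  constructor
  · intro h
    have := congrArg ZMod.val h
    rwa [ZMod.val_cast_of_lt hi, ZMod.val_cast_of_lt hj] at this
  · rintro rfl; rfl

lemma sub_val (hn : 0 < n) {i j : ℕ} (hi : i < n) (hj : j < n) :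
    ((i : ZMod n) - (j : ZMod n)).val = if j ≤ i then i - j else i + n - j := by
  split_ifs with h
  · have : (i : ZMod n) - (j : ZMod n) = ((i - j : ℕ) : ZMod n) := by
      push_cast [Nat.cast_sub h]; ring
    rw [this, ZMod.val_cast_of_lt (by omega)]
  · have : (i : ZMod n) - (j : ZMod n) = ((i + n - j : ℕ) : ZMod n) := by
      push_cast [Nat.cast_sub (by omega : j ≤ i + n)]
      simp [ZMod.natCast_self]
    rw [this, ZMod.val_cast_of_lt (by omega)]

lemma btwn_iff (hn : 0 < n) {i x j : ℕ} (hi : i < n) (hx : x < n) (hj : j < n) :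
    btwn n i x j ↔ ((i < x ∧ x < j) ∨ (x < j ∧ j < i) ∨ (j < i ∧ i < x)) := by
  unfold btwn
  rw [sub_val hn hx hi, sub_val hn hj hi]
  split_ifs <;> omega

/-- linear chord -/
def L (n i j : ℕ) : Finset (ZMod n) := {(i : ZMod n), (j : ZMod n)}

lemma L_inj (hn : 0 < n) {i j p q : ℕ} (hij : i < j) (hj : j < n) (hpq : p < q) (hq : q < n)
    (h : L n i j = L n p q) : i = p ∧ j = q := by
  rcases pair_cases h with ⟨h1, h2⟩ | ⟨h1, h2⟩ <;>
    [skip; skip] <;>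
  · rw [cast_inj hn (by omega) (by omega)] at h1 h2
    omega

lemma cross_iff (hn : 0 < n) {i j k l : ℕ} (hij : i < j) (hj : j < n) (hkl : k < l) (hl : l < n) :
    Crosses n (L n i j) (L n k l) ↔ ((i < k ∧ k < j ∧ j < l) ∨ (k < i ∧ i < l ∧ l < j)) := by
  constructor
  · rintro ⟨a, b, c, d, he, hf, h1, h2⟩
    rcases pair_cases he.symm with ⟨ha, hb⟩ | ⟨ha, hb⟩ <;>
    rcases pair_cases hf.symm with ⟨hc, hd⟩ | ⟨hc, hd⟩ <;>
      subst ha hb hc hd <;>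
      [skip; skip; skip; skip] <;>
    · have g1 := (btwn_iff hn (by omega) (by omega) (by omega)).1 h1
      have g2 := (btwn_iff hn (by omega) (by omega) (by omega)).1 h2
      omega
  · intro h
    rcases h with ⟨h1, h2, h3⟩ | ⟨h1, h2, h3⟩
    · exact ⟨i, j, k, l, rfl, rfl,
        (btwn_iff hn (by omega) (by omega) (by omega)).2 (by omega),
        (btwn_iff hn (by omega) (by omega) (by omega)).2 (by omega)⟩
    · exact ⟨j, i, k, l, by rw [L, Finset.pair_comm], rfl,
        (btwn_iff hn (by omega) (by omega) (by omega)).2 (by omega),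
        (btwn_iff hn (by omega) (by omega) (by omega)).2 (by omega)⟩

/-- A chord of the sub-polygon on vertex set `V`. -/
def IsChord (n : ℕ) (V : Finset ℕ) (e : Finset (ZMod n)) : Prop :=
  ∃ i j, i ∈ V ∧ j ∈ V ∧ i < j ∧ e = L n i j ∧
    (∃ x ∈ V, i < x ∧ x < j) ∧ (∃ y ∈ V, y < i ∨ j < y)

/-- Diagonals compatible with `S` but not in `S`. -/
def compat (n : ℕ) (V : Finset ℕ) (S : Finset (Finset (ZMod n))) : Set (Finset (ZMod n)) :=
  {e | IsChord n V e ∧ e ∉ S ∧ ∀ f ∈ S, ¬Crosses n e f ∧ ¬Crosses n f e}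

lemma chord_mono {V W : Finset ℕ} (hVW : V ⊆ W) {e : Finset (ZMod n)}
    (h : IsChord n V e) : IsChord n W e := by
  obtain ⟨i, j, hi, hj, hij, he, ⟨x, hx, hx2⟩, ⟨y, hy, hy2⟩⟩ := h
  exact ⟨i, j, hVW hi, hVW hj, hij, he, ⟨x, hVW hx, hx2⟩, ⟨y, hVW hy, hy2⟩⟩

lemma chord_card4 {V : Finset ℕ} {e : Finset (ZMod n)} (h : IsChord n V e) : 4 ≤ V.card := by
  obtain ⟨i, j, hi, hj, hij, he, ⟨x, hx, hx2⟩, ⟨y, hy, hy2⟩⟩ := h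
  have hsub : ({i, x, j, y} : Finset ℕ) ⊆ V := by
    intro z hz
    simp only [Finset.mem_insert, Finset.mem_singleton] at hz
    rcases hz with rfl | rfl | rfl | rfl <;> assumption
  have h4 : ({i, x, j, y} : Finset ℕ).card = 4 := by
    rw [Finset.card_insert_of_notMem (by simp; omega),
      Finset.card_insert_of_notMem (by simp; omega),
      Finset.card_insert_of_notMem (by simp; omega), Finset.card_singleton]
  calc 4 = ({i, x, j, y} : Finset ℕ).card := h4.symm
    _ ≤ V.card := Finset.card_le_card hsub

lemma chord_bounds {V : Finset ℕ} (hV : V ⊆ Finset.range n) {i : ℕ}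
    (hi : i ∈ V) : i < n := Finset.mem_range.1 (hV hi)

/-- chords over nested/disjoint linear spans do not cross. -/
lemma sep (hn : 0 < n) {i j k l p q : ℕ} (hij : i < j) (hj : j < n) (hkl : k < l) (hl : l < n)
    (hpi : p ≤ i) (hjq : j ≤ q)
    (hout : l ≤ p ∨ q ≤ k ∨ (k ≤ p ∧ q ≤ l)) :
    ¬Crosses n (L n i j) (L n k l) ∧ ¬Crosses n (L n k l) (L n i j) := by
  rw [cross_iff hn hij hj hkl hl, cross_iff hn hkl hl hij hj]
  omega

lemma self_not_cross (hn : 0 < n) {i j : ℕ} (hij : i < j) (hj : j < n) :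
    ¬Crosses n (L n i j) (L n i j) := by
  rw [cross_iff hn hij hj hij hj]; omega

lemma exists_sorted4 {V : Finset ℕ} (h : V.card = 4) :
    ∃ a b c d, a < b ∧ b < c ∧ c < d ∧ V = {a, b, c, d} := by
  have hl : (V.sort (· ≤ ·)).length = 4 := by rw [Finset.length_sort]; exact h
  have hs := Finset.pairwise_sort V (· ≤ ·)
  have hnd := Finset.sort_nodup V (· ≤ ·)
  have ht := Finset.sort_toFinset V (· ≤ ·)
  rcases hV : V.sort (· ≤ ·) with _ | ⟨a, _ | ⟨b, _ | ⟨c, _ | ⟨d, _ | _⟩⟩⟩⟩ <;>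
    rw [hV] at hl <;> simp at hl
  rw [hV] at hs hnd ht
  simp [List.pairwise_cons] at hs
  simp at hnd
  refine ⟨a, b, c, d, by omega, by omega, by omega, ?_⟩
  rw [← ht]; simp

lemma chord4 (hn : 0 < n) {V : Finset ℕ} (hV : V ⊆ Finset.range n) {a b c d : ℕ}
    (hab : a < b) (hbc : b < c) (hcd : c < d) (hVeq : V = {a, b, c, d}) (e : Finset (ZMod n)) :
    IsChord n V e ↔ (e = L n a c ∨ e = L n b d) := by
  constructor
  · rintro ⟨i, j, hi, hj, hij, rfl, ⟨x, hx, hx2⟩, ⟨y, hy, hy2⟩⟩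
    rw [hVeq] at hi hj hx hy
    simp only [Finset.mem_insert, Finset.mem_singleton] at hi hj hx hy
    have : (i = a ∧ j = c) ∨ (i = b ∧ j = d) := by omega
    rcases this with ⟨rfl, rfl⟩ | ⟨rfl, rfl⟩
    · exact Or.inl rfl
    · exact Or.inr rfl
  · have ha : a ∈ V := by rw [hVeq]; simp
    have hb : b ∈ V := by rw [hVeq]; simp
    have hc : c ∈ V := by rw [hVeq]; simp
    have hd : d ∈ V := by rw [hVeq]; simp
    rintro (rfl | rfl)
    · exact ⟨a, c, ha, hc, by omega, rfl, ⟨b, hb, by omega⟩, ⟨d, hd, by omega⟩⟩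
    · exact ⟨b, d, hb, hd, by omega, rfl, ⟨c, hc, by omega⟩, ⟨a, ha, by omega⟩⟩

lemma chord_split (hn : 0 < n) {V : Finset ℕ} (hV : V ⊆ Finset.range n) {p q : ℕ}
    (hp : p ∈ V) (hq : q ∈ V) (hpq : p < q) {e : Finset (ZMod n)} (he : IsChord n V e)
    (hne : e ≠ L n p q) (hcr : ¬Crosses n e (L n p q)) :
    IsChord n (V.filter (fun x => p ≤ x ∧ x ≤ q)) e ∨
      IsChord n (V.filter (fun x => x ≤ p ∨ q ≤ x)) e := by
  obtain ⟨i, j, hi, hj, hij, rfl, ⟨x, hx, hx2⟩, ⟨y, hy, hy2⟩⟩ := he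
  have hjn : j < n := chord_bounds hV hj
  have hqn : q < n := chord_bounds hV hq
  rw [cross_iff hn hij hjn hpq hqn] at hcr
  have hne' : ¬(i = p ∧ j = q) := by rintro ⟨rfl, rfl⟩; exact hne rfl
  have hcases : j ≤ p ∨ q ≤ i ∨ (p ≤ i ∧ j ≤ q ∧ ¬(i = p ∧ j = q)) ∨
      (i ≤ p ∧ q ≤ j ∧ ¬(i = p ∧ j = q)) := by omega
  rcases hcases with h | h | ⟨h1, h2, h3⟩ | ⟨h1, h2, h3⟩
  · -- j ≤ p : inside V₂
    refine Or.inr ⟨i, j, ?_, ?_, hij, rfl, ⟨x, ?_, hx2⟩, ⟨q, ?_, by omega⟩⟩ <;>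
      simp only [Finset.mem_filter] <;> [exact ⟨hi, by omega⟩; exact ⟨hj, by omega⟩;
        exact ⟨hx, by omega⟩; exact ⟨hq, by omega⟩]
  · -- q ≤ i : inside V₂
    refine Or.inr ⟨i, j, ?_, ?_, hij, rfl, ⟨x, ?_, hx2⟩, ⟨p, ?_, by omega⟩⟩ <;>
      simp only [Finset.mem_filter] <;> [exact ⟨hi, by omega⟩; exact ⟨hj, by omega⟩;
        exact ⟨hx, by omega⟩; exact ⟨hp, by omega⟩]
  · -- p ≤ i, j ≤ q : inside V₁
    refine Or.inl ⟨i, j, ?_, ?_, hij, rfl, ⟨x, ?_, hx2⟩, ?_⟩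
    · simp only [Finset.mem_filter]; exact ⟨hi, by omega⟩
    · simp only [Finset.mem_filter]; exact ⟨hj, by omega⟩
    · simp only [Finset.mem_filter]; exact ⟨hx, by omega⟩
    · by_cases hip : p < i
      · exact ⟨p, by simp only [Finset.mem_filter]; exact ⟨hp, by omega⟩, by omega⟩
      · exact ⟨q, by simp only [Finset.mem_filter]; exact ⟨hq, by omega⟩, by omega⟩
  · -- i ≤ p, q ≤ j : inside V₂
    refine Or.inr ⟨i, j, ?_, ?_, hij, rfl, ?_, ⟨y, ?_, hy2⟩⟩
    · simp only [Finset.mem_filter]; exact ⟨hi, by omega⟩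
    · simp only [Finset.mem_filter]; exact ⟨hj, by omega⟩
    · by_cases hip : i < p
      · exact ⟨p, by simp only [Finset.mem_filter]; exact ⟨hp, by omega⟩, by omega⟩
      · exact ⟨q, by simp only [Finset.mem_filter]; exact ⟨hq, by omega⟩, by omega⟩
    · simp only [Finset.mem_filter]; exact ⟨hy, by omega⟩

lemma chord_not_both (hn : 0 < n) {V : Finset ℕ} (hV : V ⊆ Finset.range n) {p q : ℕ}
    (hpq : p < q) {e : Finset (ZMod n)}
    (h1 : IsChord n (V.filter (fun x => p ≤ x ∧ x ≤ q)) e)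
    (h2 : IsChord n (V.filter (fun x => x ≤ p ∨ q ≤ x)) e) : False := by
  obtain ⟨i, j, hi, hj, hij, rfl, _, ⟨y, hy, hy2⟩⟩ := h1
  obtain ⟨i', j', hi', hj', hij', he', _, _⟩ := h2
  simp only [Finset.mem_filter] at hi hj hi' hj' hy
  have hjn : j < n := chord_bounds hV hj.1
  have hj'n : j' < n := chord_bounds hV hj'.1
  obtain ⟨rfl, rfl⟩ : i' = i ∧ j' = j := by
    have := L_inj hn hij' hj'n hij hjn he'.symm
    omega
  omega

lemma chords_sep (hn : 0 < n) {V : Finset ℕ} (hV : V ⊆ Finset.range n) {p q : ℕ}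
    (hpq : p < q) {e f : Finset (ZMod n)}
    (h1 : IsChord n (V.filter (fun x => p ≤ x ∧ x ≤ q)) e)
    (h2 : IsChord n (V.filter (fun x => x ≤ p ∨ q ≤ x)) f) :
    ¬Crosses n e f ∧ ¬Crosses n f e := by
  obtain ⟨i, j, hi, hj, hij, rfl, _, _⟩ := h1
  obtain ⟨k, l, hk, hl, hkl, rfl, _, _⟩ := h2
  simp only [Finset.mem_filter] at hi hj hk hl
  have hjn : j < n := chord_bounds hV hj.1
  have hln : l < n := chord_bounds hV hl.1
  exact sep hn hij hjn hkl hln hi.2.1 hj.2.2 (by omega)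

lemma main_count (hn4 : 4 ≤ n) :
    ∀ k (V : Finset ℕ), V ⊆ Finset.range n → V.card = k →
      ∀ S : Finset (Finset (ZMod n)), (∀ e ∈ S, IsChord n V e) →
      (∀ e ∈ S, ∀ f ∈ S, ¬Crosses n e f) →
      S.card ≤ k - 3 ∧
      (S.card + 3 = k → compat n V S = ∅) ∧
      (S.card + 4 = k → ∃ e₁ e₂, e₁ ≠ e₂ ∧ compat n V S = {e₁, e₂}) := by
  have hn : 0 < n := by omega
  intro k
  induction k using Nat.strong_induction_on with
  | _ k IH =>
  intro V hVr hVc S hSch hScr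
  by_cases hk3 : k ≤ 3
  · have hS : S = ∅ := by
      rcases Finset.eq_empty_or_nonempty S with h | ⟨e, he⟩
      · exact h
      · exact absurd (hVc ▸ chord_card4 (hSch e he)) (by omega)
    subst hS
    refine ⟨by simp, fun h => ?_, fun h => by omega⟩
    apply Set.eq_empty_iff_forall_notMem.2
    rintro e ⟨hech, -, -⟩
    exact absurd (hVc ▸ chord_card4 hech) (by omega)
  by_cases hk4 : k = 4
  · subst hk4
    obtain ⟨a, b, c, d, hab, hbc, hcd, hVeq⟩ := exists_sorted4 hVc
    have han : a < n := chord_bounds hVr (by rw [hVeq]; simp)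
    have hbn : b < n := chord_bounds hVr (by rw [hVeq]; simp)
    have hcn : c < n := chord_bounds hVr (by rw [hVeq]; simp)
    have hdn : d < n := chord_bounds hVr (by rw [hVeq]; simp)
    have hch := chord4 hn hVr hab hbc hcd hVeq
    have hC1 : Crosses n (L n a c) (L n b d) :=
      (cross_iff hn (by omega) hcn (by omega) hdn).2 (Or.inl ⟨hab, hbc, hcd⟩)
    have hC2 : Crosses n (L n b d) (L n a c) :=
      (cross_iff hn (by omega) hdn (by omega) hcn).2 (Or.inr ⟨hab, hbc, hcd⟩)
    have hLne : L n a c ≠ L n b d := fun h => by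
      have := L_inj hn (by omega) hcn (by omega) hdn h; omega
    have hsub : S ⊆ {L n a c, L n b d} := fun e he => by
      rcases (hch e).1 (hSch e he) with rfl | rfl <;> simp
    have hnotboth : ¬(L n a c ∈ S ∧ L n b d ∈ S) := fun ⟨h1, h2⟩ => hScr _ h1 _ h2 hC1
    have hcard1 : S.card ≤ 1 := by
      by_contra hgt
      have h2 : ({L n a c, L n b d} : Finset (Finset (ZMod n))).card ≤ S.card := by
        rw [Finset.card_pair hLne]; omega
      have heq := Finset.eq_of_subset_of_card_le hsub h2
      exact hnotboth ⟨heq ▸ by simp, heq ▸ by simp⟩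
    refine ⟨by omega, fun hc3 => ?_, fun hc4 => ?_⟩
    · have hSc : S.card = 1 := by omega
      obtain ⟨e0, hSe⟩ := Finset.card_eq_one.1 hSc
      subst hSe
      apply Set.eq_empty_iff_forall_notMem.2
      rintro f ⟨hfch, hfS, hfnc⟩
      simp only [Finset.mem_singleton] at hfS
      have he0 : e0 ∈ ({e0} : Finset (Finset (ZMod n))) := Finset.mem_singleton_self e0
      obtain ⟨hnc1, hnc2⟩ := hfnc e0 he0
      rcases (hch e0).1 (hSch e0 he0) with he0eq | he0eq <;>
        rcases (hch f).1 hfch with hfeq | hfeq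
      · exact hfS (by rw [hfeq, he0eq])
      · exact hnc1 (by rw [hfeq, he0eq]; exact hC2)
      · exact hnc1 (by rw [hfeq, he0eq]; exact hC1)
      · exact hfS (by rw [hfeq, he0eq])
    · have hS0 : S = ∅ := Finset.card_eq_zero.1 (by omega)
      subst hS0
      refine ⟨L n a c, L n b d, hLne, ?_⟩
      ext f
      simp only [compat, Set.mem_setOf_eq, Finset.notMem_empty, not_false_iff, true_and,
        Set.mem_insert_iff, Set.mem_singleton_iff]
      constructor
      · rintro ⟨hfch, -⟩; exact (hch f).1 hfch
      · rintro h
        exact ⟨(hch f).2 h, fun g hg => hg.elim⟩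
  · -- k ≥ 5
    have hk5 : 5 ≤ k := by omega
    rcases Finset.eq_empty_or_nonempty S with rfl | ⟨c0, hc0⟩
    · exact ⟨by simp, fun h => by simp at h; omega, fun h => by simp at h; omega⟩
    · obtain ⟨p, q, hpV, hqV, hpq, hc0eq, ⟨x0, hx0, hx0b⟩, ⟨y0, hy0, hy0b⟩⟩ := hSch c0 hc0
      subst hc0eq
      classical
      set V₁ := V.filter (fun x => p ≤ x ∧ x ≤ q) with hV₁
      set V₂ := V.filter (fun x => x ≤ p ∨ q ≤ x) with hV₂
      set S₁ := (S.erase (L n p q)).filter (fun e => IsChord n V₁ e) with hS₁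
      set S₂ := (S.erase (L n p q)) \ S₁ with hS₂def
      have hV₁r : V₁ ⊆ Finset.range n := (Finset.filter_subset _ _).trans hVr
      have hV₂r : V₂ ⊆ Finset.range n := (Finset.filter_subset _ _).trans hVr
      have hqn : q < n := chord_bounds hVr hqV
      have hunion : V₁ ∪ V₂ = V := by
        ext z
        simp only [Finset.mem_union, hV₁, hV₂, Finset.mem_filter]
        constructor
        · rintro (⟨h, -⟩ | ⟨h, -⟩) <;> exact h
        · intro h
          by_cases hz : p ≤ z ∧ z ≤ q
          · exact Or.inl ⟨h, hz⟩
          · exact Or.inr ⟨h, by omega⟩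
      have hinter : V₁ ∩ V₂ = {p, q} := by
        ext z
        simp only [Finset.mem_inter, hV₁, hV₂, Finset.mem_filter, Finset.mem_insert,
          Finset.mem_singleton]
        constructor
        · rintro ⟨⟨-, h1⟩, ⟨-, h2⟩⟩; omega
        · rintro (rfl | rfl)
          · exact ⟨⟨hpV, by omega⟩, ⟨hpV, by omega⟩⟩
          · exact ⟨⟨hqV, by omega⟩, ⟨hqV, by omega⟩⟩
      have hk12 : V₁.card + V₂.card = k + 2 := by
        have h := Finset.card_union_add_card_inter V₁ V₂
        rw [hunion, hinter, hVc, Finset.card_pair (by omega : p ≠ q)] at h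
        omega
      have hk₁3 : 3 ≤ V₁.card := by
        have hsub3 : ({p, x0, q} : Finset ℕ) ⊆ V₁ := by
          intro z hz
          simp only [Finset.mem_insert, Finset.mem_singleton] at hz
          simp only [hV₁, Finset.mem_filter]
          rcases hz with rfl | rfl | rfl
          · exact ⟨hpV, by omega⟩
          · exact ⟨hx0, by omega⟩
          · exact ⟨hqV, by omega⟩
        have h3 : ({p, x0, q} : Finset ℕ).card = 3 := by
          rw [Finset.card_insert_of_notMem (by simp; omega),
            Finset.card_insert_of_notMem (by simp; omega), Finset.card_singleton]
        calc 3 = ({p, x0, q} : Finset ℕ).card := h3.symm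
          _ ≤ V₁.card := Finset.card_le_card hsub3
      have hk₂3 : 3 ≤ V₂.card := by
        have hsub3 : ({y0, p, q} : Finset ℕ) ⊆ V₂ := by
          intro z hz
          simp only [Finset.mem_insert, Finset.mem_singleton] at hz
          simp only [hV₂, Finset.mem_filter]
          rcases hz with rfl | rfl | rfl
          · exact ⟨hy0, by omega⟩
          · exact ⟨hpV, by omega⟩
          · exact ⟨hqV, by omega⟩
        have h3 : ({y0, p, q} : Finset ℕ).card = 3 := by
          rw [Finset.card_insert_of_notMem (by simp; omega),
            Finset.card_insert_of_notMem (by simp; omega), Finset.card_singleton]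
        calc 3 = ({y0, p, q} : Finset ℕ).card := h3.symm
          _ ≤ V₂.card := Finset.card_le_card hsub3
      have hS₁sub : S₁ ⊆ S := (Finset.filter_subset _ _).trans (Finset.erase_subset _ _)
      have hS₂sub : S₂ ⊆ S := Finset.sdiff_subset.trans (Finset.erase_subset _ _)
      have hS₁ch : ∀ e ∈ S₁, IsChord n V₁ e := fun e he => (Finset.mem_filter.1 he).2
      have hS₂ch : ∀ e ∈ S₂, IsChord n V₂ e := by
        intro e he
        have h1 := Finset.mem_sdiff.1 he
        have hne : e ≠ L n p q := Finset.ne_of_mem_erase h1.1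
        have hech : IsChord n V e := hSch e (Finset.mem_of_mem_erase h1.1)
        have hcr : ¬Crosses n e (L n p q) := hScr e (Finset.mem_of_mem_erase h1.1) _ hc0
        rcases chord_split hn hVr hpV hqV hpq hech hne hcr with h | h
        · exact absurd (Finset.mem_filter.2 ⟨h1.1, h⟩) h1.2
        · exact h
      have hcardsplit : S₁.card + S₂.card + 1 = S.card := by
        have h1 : S₁ ⊆ S.erase (L n p q) := Finset.filter_subset _ _
        have h2 : S₂.card = (S.erase (L n p q)).card - S₁.card := by
          rw [hS₂def]; exact Finset.card_sdiff_of_subset h1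
        have h3 := Finset.card_erase_of_mem hc0
        have h4 := Finset.card_le_card h1
        have h5 : 1 ≤ S.card := Finset.card_pos.2 ⟨_, hc0⟩
        omega
      have IH₁ := IH V₁.card (by omega) V₁ hV₁r rfl S₁ hS₁ch
        (fun e he f hf => hScr e (hS₁sub he) f (hS₁sub hf))
      have IH₂ := IH V₂.card (by omega) V₂ hV₂r rfl S₂ hS₂ch
        (fun e he f hf => hScr e (hS₂sub he) f (hS₂sub hf))
      have hc0not₁ : ¬IsChord n V₁ (L n p q) := by
        rintro ⟨i, j, hi, hj, hij, he, -, ⟨y, hy, hyb⟩⟩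
        simp only [hV₁, Finset.mem_filter] at hi hj hy
        have hjn : j < n := chord_bounds hVr hj.1
        obtain ⟨rfl, rfl⟩ : p = i ∧ q = j := L_inj hn hpq hqn hij hjn he
        omega
      have hc0not₂ : ¬IsChord n V₂ (L n p q) := by
        rintro ⟨i, j, hi, hj, hij, he, ⟨x, hx, hxb⟩, -⟩
        simp only [hV₂, Finset.mem_filter] at hi hj hx
        have hjn : j < n := chord_bounds hVr hj.1
        obtain ⟨rfl, rfl⟩ : p = i ∧ q = j := L_inj hn hpq hqn hij hjn he
        omega
      have hcu : compat n V S = compat n V₁ S₁ ∪ compat n V₂ S₂ := by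
        ext e
        simp only [compat, Set.mem_setOf_eq, Set.mem_union]
        constructor
        · rintro ⟨hech, heS, henc⟩
          have hne : e ≠ L n p q := fun h => heS (h ▸ hc0)
          rcases chord_split hn hVr hpV hqV hpq hech hne (henc _ hc0).1 with h | h
          · exact Or.inl ⟨h, fun hmem => heS (hS₁sub hmem), fun f hf => henc f (hS₁sub hf)⟩
          · exact Or.inr ⟨h, fun hmem => heS (hS₂sub hmem), fun f hf => henc f (hS₂sub hf)⟩
        · have hSmem : ∀ f ∈ S, f = L n p q ∨ f ∈ S₁ ∨ f ∈ S₂ := by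
            intro f hf
            by_cases hfc : f = L n p q
            · exact Or.inl hfc
            · have hmem : f ∈ S.erase (L n p q) := Finset.mem_erase.2 ⟨hfc, hf⟩
              by_cases hf1 : f ∈ S₁
              · exact Or.inr (Or.inl hf1)
              · exact Or.inr (Or.inr (Finset.mem_sdiff.2 ⟨hmem, hf1⟩))
          rintro (⟨hech, heS₁, henc⟩ | ⟨hech, heS₂, henc⟩)
          · obtain ⟨i, j, hi, hj, hij, heq, hin, hout⟩ := hech
            have hi' := (Finset.mem_filter.1 hi).2
            have hj' := (Finset.mem_filter.1 hj).2
            have hjn : j < n := chord_bounds hV₁r hj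
            have hsep0 : ¬Crosses n e (L n p q) ∧ ¬Crosses n (L n p q) e := by
              rw [heq]
              exact sep hn hij hjn hpq hqn hi'.1 hj'.2
                (Or.inr (Or.inr ⟨le_refl p, le_refl q⟩))
            refine ⟨chord_mono (Finset.filter_subset _ _) ⟨i, j, hi, hj, hij, heq, hin, hout⟩,
              ?_, ?_⟩
            · intro heS
              rcases hSmem e heS with rfl | h | h
              · exact hc0not₁ ⟨i, j, hi, hj, hij, heq, hin, hout⟩
              · exact heS₁ h
              · exact chord_not_both hn hVr hpq ⟨i, j, hi, hj, hij, heq, hin, hout⟩ (hS₂ch e h)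
            · intro f hf
              rcases hSmem f hf with rfl | h | h
              · exact hsep0
              · exact henc f h
              · exact chords_sep hn hVr hpq ⟨i, j, hi, hj, hij, heq, hin, hout⟩ (hS₂ch f h)
          · obtain ⟨i, j, hi, hj, hij, heq, hin, hout⟩ := hech
            have hi' := (Finset.mem_filter.1 hi).2
            have hj' := (Finset.mem_filter.1 hj).2
            have hjn : j < n := chord_bounds hV₂r hj
            have hsep0 : ¬Crosses n (L n p q) e ∧ ¬Crosses n e (L n p q) := by
              rw [heq]
              exact sep hn hpq hqn hij hjn (le_refl p) (le_refl q) (by omega)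
            refine ⟨chord_mono (Finset.filter_subset _ _) ⟨i, j, hi, hj, hij, heq, hin, hout⟩,
              ?_, ?_⟩
            · intro heS
              rcases hSmem e heS with rfl | h | h
              · exact hc0not₂ ⟨i, j, hi, hj, hij, heq, hin, hout⟩
              · exact chord_not_both hn hVr hpq (hS₁ch e h) ⟨i, j, hi, hj, hij, heq, hin, hout⟩
              · exact heS₂ h
            · intro f hf
              rcases hSmem f hf with rfl | h | h
              · exact ⟨hsep0.2, hsep0.1⟩
              · have hcs := chords_sep hn hVr hpq (hS₁ch f h) ⟨i, j, hi, hj, hij, heq, hin, hout⟩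
                exact ⟨hcs.2, hcs.1⟩
              · exact henc f h
      refine ⟨?_, ?_, ?_⟩
      · have ha1 := IH₁.1; have ha2 := IH₂.1; omega
      · intro hcard
        have h1 : S₁.card + 3 = V₁.card ∧ S₂.card + 3 = V₂.card := by
          have ha1 := IH₁.1; have ha2 := IH₂.1; omega
        rw [hcu, IH₁.2.1 h1.1, IH₂.2.1 h1.2, Set.union_empty]
      · intro hcard
        have h1 : (S₁.card + 4 = V₁.card ∧ S₂.card + 3 = V₂.card) ∨
            (S₁.card + 3 = V₁.card ∧ S₂.card + 4 = V₂.card) := by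
          have ha1 := IH₁.1; have ha2 := IH₂.1; omega
        rcases h1 with ⟨ha1, ha2⟩ | ⟨ha1, ha2⟩
        · obtain ⟨e₁, e₂, hne, heq⟩ := IH₁.2.2 ha1
          exact ⟨e₁, e₂, hne, by rw [hcu, heq, IH₂.2.1 ha2, Set.union_empty]⟩
        · obtain ⟨e₁, e₂, hne, heq⟩ := IH₂.2.2 ha2
          exact ⟨e₁, e₂, hne, by rw [hcu, heq, IH₁.2.1 ha1, Set.empty_union]⟩

lemma diag_to_chord_aux (hn4 : 4 ≤ n) {a b : ZMod n} (h : a.val < b.val)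
    (h1 : b - a ≠ 1) (h2 : a - b ≠ 1) : IsChord n (Finset.range n) {a, b} := by
  have hn : 0 < n := by omega
  haveI : NeZero n := ⟨by omega⟩
  have hin : a.val < n := ZMod.val_lt a
  have hjn : b.val < n := ZMod.val_lt b
  have hai : ((a.val : ℕ) : ZMod n) = a := ZMod.natCast_rightInverse a
  have hbj : ((b.val : ℕ) : ZMod n) = b := ZMod.natCast_rightInverse b
  have hsv : (b - a).val = b.val - a.val := by
    rw [← hai, ← hbj, sub_val hn hjn hin, if_pos (le_of_lt h), ZMod.val_cast_of_lt hin,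
      ZMod.val_cast_of_lt hjn]
  have hsv2 : (a - b).val = a.val + n - b.val := by
    rw [← hai, ← hbj, sub_val hn hin hjn, if_neg (by omega), ZMod.val_cast_of_lt hin,
      ZMod.val_cast_of_lt hjn]
  have hone : (1 : ZMod n).val = 1 := by
    rw [show (1 : ZMod n) = ((1 : ℕ) : ZMod n) by push_cast; ring, ZMod.val_cast_of_lt (by omega)]
  have hd1 : b.val - a.val ≠ 1 := by
    intro hh
    apply h1
    have := ZMod.natCast_rightInverse (b - a)
    rw [hsv, hh] at this
    rw [← this]; push_cast; ring
  have hd2 : a.val + n - b.val ≠ 1 := by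
    intro hh
    apply h2
    have := ZMod.natCast_rightInverse (a - b)
    rw [hsv2, hh] at this
    rw [← this]; push_cast; ring
  refine ⟨a.val, b.val, Finset.mem_range.2 hin, Finset.mem_range.2 hjn, h, ?_,
    ⟨a.val + 1, Finset.mem_range.2 (by omega), by omega⟩, ?_⟩
  · rw [L, hai, hbj]
  · by_cases hi0 : 0 < a.val
    · exact ⟨0, Finset.mem_range.2 (by omega), Or.inl hi0⟩
    · exact ⟨n - 1, Finset.mem_range.2 (by omega), Or.inr (by omega)⟩

lemma diag_iff_chord (hn4 : 4 ≤ n) (e : Finset (ZMod n)) :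
    IsDiagonal n e ↔ IsChord n (Finset.range n) e := by
  have hn : 0 < n := by omega
  haveI : NeZero n := ⟨by omega⟩
  constructor
  · rintro ⟨a, b, rfl, hab, h1, h2⟩
    rcases Nat.lt_trichotomy a.val b.val with h | h | h
    · exact diag_to_chord_aux hn4 h h1 h2
    · exact absurd (by
        rw [← ZMod.natCast_rightInverse a, ← ZMod.natCast_rightInverse b, h]) hab
    · rw [Finset.pair_comm]
      exact diag_to_chord_aux hn4 h h2 h1
  · rintro ⟨i, j, hi, hj, hij, rfl, ⟨x, hx, hxb⟩, ⟨y, hy, hyb⟩⟩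
    rw [Finset.mem_range] at hi hj hx hy
    have hone : (1 : ZMod n).val = 1 := by
      rw [show (1 : ZMod n) = ((1 : ℕ) : ZMod n) by push_cast; ring,
        ZMod.val_cast_of_lt (by omega)]
    refine ⟨(i : ZMod n), (j : ZMod n), rfl, ?_, ?_, ?_⟩
    · intro hh
      rw [cast_inj hn hi hj] at hh
      omega
    · intro hh
      have := congrArg ZMod.val hh
      rw [sub_val hn hj hi, if_pos (by omega), hone] at this
      omega
    · intro hh
      have := congrArg ZMod.val hh
      rw [sub_val hn hi hj, if_neg (by omega), hone] at this
      omega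

end Poly

open Poly

/-- Every codimension-1 face (a set of `n - 4` pairwise non-crossing diagonals) of the
complex of non-crossing diagonal sets of the convex `n`-gon is contained in exactly
two triangulations. -/
theorem polygon_pseudomanifold (n : ℕ) (hn : 4 ≤ n)
    (F : Finset (Finset (ZMod n))) (hF : NonCrossing n F) (hcard : F.card = n - 4) :
    {T : Finset (Finset (ZMod n)) | IsPolyTriangulation n T ∧ F ⊆ T}.ncard = 2 := by
  have hn0 : 0 < n := by omega
  have hdg : ∀ e, IsDiagonal n e ↔ IsChord n (Finset.range n) e := Poly.diag_iff_chord hn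
  have hFch : ∀ e ∈ F, IsChord n (Finset.range n) e := fun e he => (hdg e).1 (hF.1 e he)
  have hmain := Poly.main_count hn n (Finset.range n) (le_refl _) (Finset.card_range n)
  obtain ⟨-, -, hc⟩ := hmain F hFch hF.2
  obtain ⟨e₁, e₂, hne, hcompat⟩ := hc (by omega)
  have hbound : ∀ T : Finset (Finset (ZMod n)), (∀ e ∈ T, IsChord n (Finset.range n) e) →
      (∀ e ∈ T, ∀ f ∈ T, ¬Crosses n e f) → T.card ≤ n - 3 :=
    fun T h1 h2 => (hmain T h1 h2).1
  have he₁ : e₁ ∈ compat n (Finset.range n) F := by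
    rw [hcompat]; exact Set.mem_insert _ _
  have he₂ : e₂ ∈ compat n (Finset.range n) F := by
    rw [hcompat]; exact Set.mem_insert_iff.2 (Or.inr rfl)
  have hself : ∀ e, IsChord n (Finset.range n) e → ¬Crosses n e e := by
    rintro e ⟨i, j, hi, hj, hij, rfl, -, -⟩
    exact Poly.self_not_cross hn0 hij (Finset.mem_range.1 hj)
  have htri : ∀ e ∈ compat n (Finset.range n) F,
      IsPolyTriangulation n (insert e F) ∧ F ⊆ insert e F := by
    intro e he
    obtain ⟨hech, heF, henc⟩ := he
    have hins_ch : ∀ f ∈ insert e F, IsChord n (Finset.range n) f := by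
      intro f hf
      rcases Finset.mem_insert.1 hf with rfl | hf
      · exact hech
      · exact hFch f hf
    have hins_nc : ∀ f ∈ insert e F, ∀ g ∈ insert e F, ¬Crosses n f g := by
      intro f hf g hg
      rcases Finset.mem_insert.1 hf with hfe | hfF <;>
        rcases Finset.mem_insert.1 hg with hge | hgF
      · rw [hfe, hge]; exact hself _ hech
      · rw [hfe]; exact (henc g hgF).1
      · rw [hge]; exact (henc f hfF).2
      · exact hF.2 f hfF g hgF
    refine ⟨⟨⟨fun f hf => (hdg f).2 (hins_ch f hf), hins_nc⟩, ?_⟩, Finset.subset_insert e F⟩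
    intro g hgdiag hgnc
    by_contra hgT
    have hcard' : (insert g (insert e F)).card = n - 2 := by
      rw [Finset.card_insert_of_notMem hgT, Finset.card_insert_of_notMem heF, hcard]; omega
    have hch' : ∀ f ∈ insert g (insert e F), IsChord n (Finset.range n) f := by
      intro f hf
      rcases Finset.mem_insert.1 hf with rfl | hf
      · exact (hdg f).1 hgdiag
      · exact hins_ch f hf
    have hnc' : ∀ f ∈ insert g (insert e F), ∀ f' ∈ insert g (insert e F), ¬Crosses n f f' := by
      intro f hf f' hf'
      rcases Finset.mem_insert.1 hf with hfe | hfF <;>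
        rcases Finset.mem_insert.1 hf' with hge | hgF
      · rw [hfe, hge]; exact hself _ ((hdg _).1 hgdiag)
      · rw [hfe]; exact (hgnc f' hgF).1
      · rw [hge]; exact (hgnc f hfF).2
      · exact hins_nc f hfF f' hgF
    have hle := hbound _ hch' hnc'
    rw [hcard'] at hle
    omega
  have hseteq : {T : Finset (Finset (ZMod n)) | IsPolyTriangulation n T ∧ F ⊆ T} =
      {insert e₁ F, insert e₂ F} := by
    ext T
    simp only [Set.mem_setOf_eq, Set.mem_insert_iff, Set.mem_singleton_iff]
    constructor
    · rintro ⟨⟨⟨hTd, hTnc⟩, hTmax⟩, hFT⟩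
      have hTle : T.card ≤ n - 3 := hbound T (fun f hf => (hdg f).1 (hTd f hf)) hTnc
      have hex : ∃ e ∈ T, e ∉ F := by
        by_contra hno
        push_neg at hno
        have hTF : T = F := Finset.Subset.antisymm hno hFT
        obtain ⟨hch1, hnF, hnc1⟩ := he₁
        have hmem : e₁ ∈ T := hTmax e₁ ((hdg e₁).2 hch1) (fun f hf => hnc1 f (hTF ▸ hf))
        exact hnF (hTF ▸ hmem)
      obtain ⟨e, heT, heF⟩ := hex
      have hsub : insert e F ⊆ T := Finset.insert_subset heT hFT
      have hTeq : insert e F = T := Finset.eq_of_subset_of_card_le hsub (by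
        rw [Finset.card_insert_of_notMem heF, hcard]; omega)
      have hecompat : e ∈ compat n (Finset.range n) F :=
        ⟨(hdg e).1 (hTd e heT), heF,
          fun f hf => ⟨hTnc e heT f (hFT hf), hTnc f (hFT hf) e heT⟩⟩
      rw [hcompat] at hecompat
      simp only [Set.mem_insert_iff, Set.mem_singleton_iff] at hecompat
      rcases hecompat with rfl | rfl
      · exact Or.inl hTeq.symm
      · exact Or.inr hTeq.symm
    · rintro (rfl | rfl)
      · exact htri e₁ he₁
      · exact htri e₂ he₂
  rw [hseteq]
  apply Set.ncard_pair
  intro h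
  have hm : e₁ ∈ insert e₂ F := h ▸ Finset.mem_insert_self e₁ F
  rcases Finset.mem_insert.1 hm with h' | h'
  · exact hne h'
  · exact he₁.2.1 h'
end

section
/- For even n, every crosscap triangulation of the Möbius strip M_n contains at least one diagonal c-arc (i, n/2 + i) for some i. -/
/-- Quasi-arcs (other than the one-sided closed curve) of the Möbius strip `M_n`,
in a combinatorial model: `c i j` is the crosscap arc from `i` through the crosscap
to `j` (`(i,j) ≠ (j,i)` for `i ≠ j`), and `t i j` is the two-sided arc cutting off the
boundary interval `[i..j]` on the side not containing the crosscap
(`t i i` is the loop at `i` enclosing the crosscap). -/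
inductive MArc (n : ℕ) : Type
  | c : ZMod n → ZMod n → MArc n
  | t : ZMod n → ZMod n → MArc n
  deriving DecidableEq

/-- Two curves in the annulus orientation double cover of `M_n` (recorded by integer
lifts of their endpoints on a `2n`-scaled circle) are disjoint: no `2n`-translate of
one strictly separates the endpoints of the other. -/
def mNoCross (n : ℕ) (P Q : ℤ × ℤ) : Prop :=
  ∀ s : ℤ, 0 ≤ (Q.1 + 2 * (n : ℤ) * s - P.1) * (Q.2 + 2 * (n : ℤ) * s - P.2)

/-- The canonical lift of the crosscap arc `(i,j)` to the double cover. -/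
def mCurve (n : ℕ) (i j : ZMod n) : ℤ × ℤ :=
  (2 * (i.val : ℤ), 2 * (i.val : ℤ) + 2 * ((j - i).val : ℤ) - (n : ℤ))

/-- The second lift (deck-transformation image) of the crosscap arc `(i,j)`. -/
def mMirror (n : ℕ) (i j : ZMod n) : ℤ × ℤ :=
  (2 * (i.val : ℤ) + 2 * ((j - i).val : ℤ), 2 * (i.val : ℤ) + (n : ℤ))

/-- Compatibility of two crosscap arcs: all lifts pairwise disjoint. -/
def cCompat (n : ℕ) (i j k l : ZMod n) : Prop :=
  mNoCross n (mCurve n i j) (mCurve n k l) ∧ mNoCross n (mCurve n i j) (mMirror n k l)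

/-- `x` lies strictly inside the cyclic boundary interval from `a` to `b`. -/
def inIntArc (n : ℕ) (a b x : ZMod n) : Prop :=
  if a = b then x ≠ a else x ≠ a ∧ x ≠ b ∧ (x - a).val < (b - a).val

/-- `x` lies in the closed cyclic boundary interval from `a` to `b`. -/
def inClArc (n : ℕ) (a b x : ZMod n) : Prop :=
  if a = b then True else (x - a).val ≤ (b - a).val

/-- Compatibility of two two-sided arcs: their crosscap-free cut-off intervals are
nested or have disjoint interiors (loops around the crosscap based at distinct
points are incompatible). -/
def tCompat (n : ℕ) (a b a' b' : ZMod n) : Prop :=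
  if a = b then (if a' = b' then a = a' else ¬ inIntArc n a' b' a)
  else if a' = b' then ¬ inIntArc n a b a'
  else (∀ x, inClArc n a b x → inClArc n a' b' x) ∨
       (∀ x, inClArc n a' b' x → inClArc n a b x) ∨
       (∀ x, inIntArc n a b x → ¬ inIntArc n a' b' x)

/-- Compatibility of a crosscap arc `(p,q)` with the two-sided arc cutting off
`[a..b]`: neither endpoint lies strictly inside the crosscap-free region. -/
def ctCompat (n : ℕ) (p q a b : ZMod n) : Prop :=
  ¬ inIntArc n a b p ∧ ¬ inIntArc n a b q

/-- Validity: every crosscap arc is an arc; a two-sided arc must not be isotopic to a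
boundary segment (its crosscap-free side contains a marked point in its interior). -/
def mValid (n : ℕ) : MArc n → Prop
  | .c _ _ => True
  | .t i j => (j = i ∧ 2 ≤ n) ∨ 2 ≤ (j - i).val

/-- Compatibility of arcs of `M_n`: disjointly realizable. -/
def mCompat (n : ℕ) : MArc n → MArc n → Prop
  | .c i j, .c k l => cCompat n i j k l
  | .c p q, .t a b => ctCompat n p q a b
  | .t a b, .c p q => ctCompat n p q a b
  | .t a b, .t a' b' => tCompat n a b a' b'

/-- A triangulation of `M_n`: a maximal collection of pairwise compatible arcs
(no one-sided closed curves). -/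
def IsMTri (n : ℕ) (T : Finset (MArc n)) : Prop :=
  (∀ a ∈ T, mValid n a) ∧ (∀ a ∈ T, ∀ b ∈ T, mCompat n a b) ∧
  (∀ a : MArc n, mValid n a → (∀ b ∈ T, mCompat n a b ∧ mCompat n b a) → a ∈ T)

/-- A crosscap triangulation: a triangulation all of whose arcs are crosscap arcs. -/
def IsCTri (n : ℕ) (T : Finset (MArc n)) : Prop :=
  IsMTri n T ∧ ∀ a ∈ T, ∃ i j : ZMod n, a = MArc.c i j

/-- The length of a crosscap arc `(i,j)`: the number of marked points in the
boundary interval `[i,j]`, with `l((i,i)) = n + 1`. -/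
def mLen (n : ℕ) : MArc n → ℕ
  | .c i j => if j = i then n + 1 else (j - i).val + 1
  | .t _ _ => 0


namespace CtriAux

/-- abstract no-crossing on the `4m`-circle -/
def NC (m : ℕ) (P Q : ℤ × ℤ) : Prop :=
  ∀ s : ℤ, 0 ≤ (Q.1 + 4 * (m : ℤ) * s - P.1) * (Q.2 + 4 * (m : ℤ) * s - P.2)

def cv (m : ℕ) (K D : ℤ) : ℤ × ℤ := (2*K, 2*K + 2*D - 2*(m:ℤ))
def mi (m : ℕ) (K D : ℤ) : ℤ × ℤ := (2*K + 2*D, 2*K + 2*(m:ℤ))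
def pp (m : ℕ) (K D : ℤ) : ℤ := if D ≤ (m:ℤ) then K else K + D - 2*(m:ℤ)
def ll (m : ℕ) (K D : ℤ) : ℤ := if D ≤ (m:ℤ) then D else 2*(m:ℤ) - D
def SM (m : ℕ) (p lam x : ℤ) : Prop := (x - p) % (2*(m:ℤ)) ≤ lam

lemma NC_sym {m : ℕ} {P Q : ℤ × ℤ} (h : NC m P Q) : NC m Q P := by
  intro s; exact (h (-s)).trans_eq (by ring)

lemma NC_mimi {m : ℕ} {K D K' D' : ℤ} (h : NC m (cv m K D) (cv m K' D')) :
    NC m (mi m K D) (mi m K' D') := by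
  intro s; exact (h s).trans_eq (by simp only [cv, mi]; ring)

lemma emod_eq {m : ℕ} {x r : ℤ} (h0 : 0 ≤ r) (h1 : r < 2*(m:ℤ))
    (hd : ∃ j : ℤ, x = r + 2*(m:ℤ)*j) : x % (2*(m:ℤ)) = r := by
  obtain ⟨j, rfl⟩ := hd
  rw [Int.add_mul_emod_self_left, Int.emod_eq_of_lt h0 h1]

lemma emod_spec {m : ℕ} (hm : 1 ≤ m) (x : ℤ) :
    0 ≤ x % (2*(m:ℤ)) ∧ x % (2*(m:ℤ)) < 2*(m:ℤ) ∧
      ∃ j : ℤ, x = x % (2*(m:ℤ)) + 2*(m:ℤ)*j := by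
  have hM : (0:ℤ) < 2*(m:ℤ) := by positivity
  refine ⟨Int.emod_nonneg x (by omega), Int.emod_lt_of_pos x hM, ⟨x / (2*(m:ℤ)), ?_⟩⟩
  rw [eq_comm, add_comm]
  exact Int.mul_ediv_add_emod x (2*(m:ℤ))

lemma SM_shift {m : ℕ} (p lam x : ℤ) (c : ℤ) :
    SM m p lam (x + 2*(m:ℤ)*c) ↔ SM m p lam x := by
  unfold SM
  rw [show x + 2*(m:ℤ)*c - p = (x - p) + 2*(m:ℤ)*c by ring, Int.add_mul_emod_self_left]

def spX (m : ℕ) (K D : ℤ) : ℤ × ℤ := (2*(pp m K D), 2*(pp m K D) + 2*(ll m K D) - 2*(m:ℤ))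
def spY (m : ℕ) (K D : ℤ) : ℤ × ℤ := (2*(pp m K D) + 2*(ll m K D), 2*(pp m K D) + 2*(m:ℤ))

lemma ll_bounds {m : ℕ} {K D : ℤ} (hD0 : 0 ≤ D) (hD1 : D < 2*(m:ℤ)) :
    0 ≤ ll m K D ∧ ll m K D ≤ (m:ℤ) := by
  unfold ll; split <;> omega

lemma NC_shiftP {m : ℕ} {P Q : ℤ × ℤ} (h : NC m P Q) :
    NC m (P.1 - 4*(m:ℤ), P.2 - 4*(m:ℤ)) Q := by
  intro s; exact (h (s+1)).trans_eq (by ring)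

lemma pair_eq {a b c d : ℤ} (h1 : a = c) (h2 : b = d) : (a, b) = (c, d) := by rw [h1, h2]

lemma span_NC {m : ℕ} {K D K' D' : ℤ}
    (h1 : NC m (cv m K D) (cv m K' D')) (h2 : NC m (cv m K D) (mi m K' D'))
    (h3 : NC m (cv m K' D') (mi m K D)) :
    NC m (spX m K D) (spY m K' D') ∧ NC m (spY m K' D') (spY m K D) := by
  have h4 : NC m (mi m K D) (mi m K' D') := NC_mimi h1
  have h2' : NC m (mi m K' D') (cv m K D) := NC_sym h2
  have h1' : NC m (cv m K' D') (cv m K D) := NC_sym h1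
  have h3' : NC m (mi m K D) (cv m K' D') := NC_sym h3
  have h4' : NC m (mi m K' D') (mi m K D) := NC_sym h4
  by_cases hD : D ≤ (m:ℤ) <;> by_cases hD' : D' ≤ (m:ℤ)
  · have eX : spX m K D = cv m K D := by
      simp only [spX, cv, pp, ll, if_pos hD]
    have eY : spY m K D = mi m K D := by
      simp only [spY, mi, pp, ll, if_pos hD]
    have eY' : spY m K' D' = mi m K' D' := by
      simp only [spY, mi, pp, ll, if_pos hD']
    rw [eX, eY, eY']
    exact ⟨h2, h4'⟩
  · have eX : spX m K D = cv m K D := by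
      simp only [spX, cv, pp, ll, if_pos hD]
    have eY : spY m K D = mi m K D := by
      simp only [spY, mi, pp, ll, if_pos hD]
    have eY' : spY m K' D' = cv m K' D' := by
      simp only [spY, cv, pp, ll, if_neg hD']
      exact pair_eq (by ring) (by ring)
    rw [eX, eY, eY']
    exact ⟨h1, h3⟩
  · have eX : spX m K D = ((mi m K D).1 - 4*(m:ℤ), (mi m K D).2 - 4*(m:ℤ)) := by
      simp only [spX, mi, pp, ll, if_neg hD]
      exact pair_eq (by ring) (by ring)
    have eY : spY m K D = cv m K D := by
      simp only [spY, cv, pp, ll, if_neg hD]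
      exact pair_eq (by ring) (by ring)
    have eY' : spY m K' D' = mi m K' D' := by
      simp only [spY, mi, pp, ll, if_pos hD']
    rw [eX, eY, eY']
    exact ⟨NC_shiftP h4, h2'⟩
  · have eX : spX m K D = ((mi m K D).1 - 4*(m:ℤ), (mi m K D).2 - 4*(m:ℤ)) := by
      simp only [spX, mi, pp, ll, if_neg hD]
      exact pair_eq (by ring) (by ring)
    have eY : spY m K D = cv m K D := by
      simp only [spY, cv, pp, ll, if_neg hD]
      exact pair_eq (by ring) (by ring)
    have eY' : spY m K' D' = cv m K' D' := by
      simp only [spY, cv, pp, ll, if_neg hD']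
      exact pair_eq (by ring) (by ring)
    rw [eX, eY, eY']
    exact ⟨NC_shiftP h3', h1'⟩

/-- Lemma 1: the span of `(K',D')` contains an endpoint of the span of `(K,D)`. -/
lemma L1 {m : ℕ} (hm : 1 ≤ m) {K D K' D' : ℤ}
    (hD0 : 0 ≤ D) (hD1 : D < 2*(m:ℤ)) (hD0' : 0 ≤ D') (hD1' : D' < 2*(m:ℤ))
    (h1 : NC m (cv m K D) (cv m K' D')) (h2 : NC m (cv m K D) (mi m K' D'))
    (h3 : NC m (cv m K' D') (mi m K D)) :
    SM m (pp m K' D') (ll m K' D') (pp m K D) ∨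
      SM m (pp m K' D') (ll m K' D') (pp m K D + ll m K D) := by
  obtain ⟨NX, NY⟩ := span_NC h1 h2 h3
  set p := pp m K D with hp
  set lam := ll m K D with hlam
  set p' := pp m K' D' with hp'
  set lam' := ll m K' D' with hlam'
  have hl : 0 ≤ lam ∧ lam ≤ (m:ℤ) := ll_bounds hD0 hD1
  have hl' : 0 ≤ lam' ∧ lam' ≤ (m:ℤ) := ll_bounds hD0' hD1'
  by_contra hcon
  push_neg at hcon
  obtain ⟨hA, hB⟩ := hcon
  unfold SM at hA hB
  push_neg at hA hB
  obtain ⟨he0, he1, j, hj⟩ := emod_spec hm (p - p')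
  set e := (p - p') % (2*(m:ℤ)) with hee
  rcases lt_or_ge (e + lam) (2*(m:ℤ)) with hcase | hcase
  · have key := NX j
    simp only [spX, spY] at key
    have hf1 : (2*p' + 2*lam') + 4*(m:ℤ)*j - 2*p = 2*lam' - 2*e := by linarith
    have hf2 : (2*p' + 2*(m:ℤ)) + 4*(m:ℤ)*j - (2*p + 2*lam - 2*(m:ℤ)) = 4*(m:ℤ) - 2*e - 2*lam := by
      linarith
    rw [← hp, ← hp', ← hlam, ← hlam'] at key
    rw [hf1, hf2] at key
    nlinarith [key, hA, hcase, he0, hl.1, hl'.1]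
  · have hBrep : (p + lam - p') % (2*(m:ℤ)) = e + lam - 2*(m:ℤ) := by
      apply emod_eq (by omega) (by omega)
      exact ⟨j + 1, by linarith⟩
    rw [hBrep] at hB
    have key := NY (-j - 1)
    simp only [spY] at key
    rw [← hp, ← hp', ← hlam, ← hlam'] at key
    have hf1 : (2*p + 2*lam) + 4*(m:ℤ)*(-j-1) - (2*p' + 2*lam') =
        2*(e + lam - 2*(m:ℤ)) - 2*lam' := by linarith
    have hf2 : (2*p + 2*(m:ℤ)) + 4*(m:ℤ)*(-j-1) - (2*p' + 2*(m:ℤ)) = 2*e - 4*(m:ℤ) := by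
      linarith
    rw [hf1, hf2] at key
    nlinarith [key, hB, he1]

/-- Core: a point whose class (or antipodal class) lies in the span does not cross
the chords of the arc. -/
lemma L2 {m : ℕ} (hm : 1 ≤ m) {K D v : ℤ} (hD0 : 0 ≤ D) (hD1 : D < 2*(m:ℤ))
    (h : SM m (pp m K D) (ll m K D) v ∨ SM m (pp m K D) (ll m K D) (v + (m:ℤ))) :
    ∀ s : ℤ, 0 ≤ (2*v + 4*(m:ℤ)*s - 2*K) * (2*v + 4*(m:ℤ)*s - 2*K - 2*D + 2*(m:ℤ)) := by
  intro s
  have key : ∀ x : ℤ, SM m (pp m K D) (ll m K D) x →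
      ∃ t u : ℤ, 0 ≤ t ∧ t ≤ ll m K D ∧ x = pp m K D + t + 2*(m:ℤ)*u := by
    intro x hx
    obtain ⟨h0, h1, j, hj⟩ := emod_spec hm (x - pp m K D)
    exact ⟨_, j, h0, hx, by linarith⟩
  rcases h with hx | hx <;> obtain ⟨t, u, ht0, ht1, hxe⟩ := key _ hx <;>
    by_cases hD : D ≤ (m:ℤ)
  · simp only [pp, ll, if_pos hD] at hxe ht1
    have hv : v = K + t + 2*(m:ℤ)*u := hxe
    rcases le_or_gt 0 (s + u) with hu | hu
    · have hmu : 0 ≤ (m:ℤ)*(s+u) := mul_nonneg (by positivity) hu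
      have f1 : 0 ≤ 2*v + 4*(m:ℤ)*s - 2*K := by nlinarith
      have f2 : 0 ≤ 2*v + 4*(m:ℤ)*s - 2*K - 2*D + 2*(m:ℤ) := by nlinarith
      exact mul_nonneg f1 f2
    · have hu' : s + u ≤ -1 := by omega
      have hmu : (m:ℤ)*(s+u) ≤ (m:ℤ)*(-1) := by
        apply mul_le_mul_of_nonneg_left hu' (by positivity)
      have f1 : 2*v + 4*(m:ℤ)*s - 2*K ≤ 0 := by nlinarith
      have f2 : 2*v + 4*(m:ℤ)*s - 2*K - 2*D + 2*(m:ℤ) ≤ 0 := by nlinarith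
      nlinarith [mul_nonneg (neg_nonneg.2 f1) (neg_nonneg.2 f2)]
  · simp only [pp, ll, if_neg hD] at hxe ht1
    have hv : v = K + D - 2*(m:ℤ) + t + 2*(m:ℤ)*u := hxe
    push_neg at hD
    rcases le_or_gt 1 (s + u) with hu | hu
    · have hmu : (m:ℤ)*1 ≤ (m:ℤ)*(s+u) := by
        apply mul_le_mul_of_nonneg_left hu (by positivity)
      have f1 : 0 ≤ 2*v + 4*(m:ℤ)*s - 2*K := by nlinarith
      have f2 : 0 ≤ 2*v + 4*(m:ℤ)*s - 2*K - 2*D + 2*(m:ℤ) := by nlinarith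
      exact mul_nonneg f1 f2
    · have hu' : s + u ≤ 0 := by omega
      have hmu : (m:ℤ)*(s+u) ≤ 0 := mul_nonpos_iff.2 (Or.inl ⟨by positivity, hu'⟩)
      have f1 : 2*v + 4*(m:ℤ)*s - 2*K ≤ 0 := by nlinarith
      have f2 : 2*v + 4*(m:ℤ)*s - 2*K - 2*D + 2*(m:ℤ) ≤ 0 := by nlinarith
      nlinarith [mul_nonneg (neg_nonneg.2 f1) (neg_nonneg.2 f2)]
  · simp only [pp, ll, if_pos hD] at hxe ht1
    have hv : v = K + t - (m:ℤ) + 2*(m:ℤ)*u := by linarith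
    rcases le_or_gt 1 (s + u) with hu | hu
    · have hmu : (m:ℤ)*1 ≤ (m:ℤ)*(s+u) := by
        apply mul_le_mul_of_nonneg_left hu (by positivity)
      have f1 : 0 ≤ 2*v + 4*(m:ℤ)*s - 2*K := by nlinarith
      have f2 : 0 ≤ 2*v + 4*(m:ℤ)*s - 2*K - 2*D + 2*(m:ℤ) := by nlinarith
      exact mul_nonneg f1 f2
    · have hu' : s + u ≤ 0 := by omega
      have hmu : (m:ℤ)*(s+u) ≤ 0 := mul_nonpos_iff.2 (Or.inl ⟨by positivity, hu'⟩)
      have f1 : 2*v + 4*(m:ℤ)*s - 2*K ≤ 0 := by nlinarith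
      have f2 : 2*v + 4*(m:ℤ)*s - 2*K - 2*D + 2*(m:ℤ) ≤ 0 := by nlinarith
      nlinarith [mul_nonneg (neg_nonneg.2 f1) (neg_nonneg.2 f2)]
  · simp only [pp, ll, if_neg hD] at hxe ht1
    have hv : v = K + D - 3*(m:ℤ) + t + 2*(m:ℤ)*u := by linarith
    push_neg at hD
    rcases le_or_gt 1 (s + u) with hu | hu
    · have hmu : (m:ℤ)*1 ≤ (m:ℤ)*(s+u) := by
        apply mul_le_mul_of_nonneg_left hu (by positivity)
      have f1 : 0 ≤ 2*v + 4*(m:ℤ)*s - 2*K := by nlinarith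
      have f2 : 0 ≤ 2*v + 4*(m:ℤ)*s - 2*K - 2*D + 2*(m:ℤ) := by nlinarith
      exact mul_nonneg f1 f2
    · have hu' : s + u ≤ 0 := by omega
      have hmu : (m:ℤ)*(s+u) ≤ 0 := mul_nonpos_iff.2 (Or.inl ⟨by positivity, hu'⟩)
      have f1 : 2*v + 4*(m:ℤ)*s - 2*K ≤ 0 := by nlinarith
      have f2 : 2*v + 4*(m:ℤ)*s - 2*K - 2*D + 2*(m:ℤ) ≤ 0 := by nlinarith
      nlinarith [mul_nonneg (neg_nonneg.2 f1) (neg_nonneg.2 f2)]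

/-- The combinatorial core: a pairwise endpoint-sharing family of short cyclic spans
admits an antipodal pair meeting all of them. -/
lemma comb {m : ℕ} (hm : 1 ≤ m) (S : Finset (ℤ × ℤ))
    (hlam : ∀ q ∈ S, 0 ≤ q.2 ∧ q.2 ≤ (m:ℤ))
    (hpair : ∀ q ∈ S, ∀ r ∈ S, SM m r.1 r.2 q.1 ∨ SM m r.1 r.2 (q.1 + q.2)) :
    ∃ v : ℤ, ∀ q ∈ S, SM m q.1 q.2 v ∨ SM m q.1 q.2 (v + (m:ℤ)) := by
  classical
  rcases S.eq_empty_or_nonempty with rfl | hS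
  · exact ⟨0, by simp⟩
  by_cases hdiag : ∃ q ∈ S, q.2 = (m:ℤ)
  · obtain ⟨q0, hq0, hq0m⟩ := hdiag
    refine ⟨q0.1, fun r hr => ?_⟩
    have := hpair q0 hq0 r hr
    rwa [hq0m] at this
  push_neg at hdiag
  have hlam' : ∀ q ∈ S, 0 ≤ q.2 ∧ q.2 ≤ (m:ℤ) - 1 := by
    intro q hq
    have h1 := hlam q hq
    have h2 := hdiag q hq
    exact ⟨h1.1, by rcases lt_or_eq_of_le h1.2 with h | h; omega; exact absurd h h2⟩
  obtain ⟨b0, hb0⟩ := hS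
  set p0 := b0.1 with hp0
  set lam0 := b0.2 with hlam0
  set bb := p0 + lam0 with hbb
  set star := S.filter (fun r => SM m r.1 r.2 bb) with hstar
  have hb0star : b0 ∈ star := by
    rw [hstar, Finset.mem_filter]
    refine ⟨hb0, ?_⟩
    unfold SM
    rw [emod_eq (hlam b0 hb0).1 (by have := (hlam' b0 hb0).2; omega) ⟨0, by ring⟩]
  obtain ⟨J, hJstar, hJmin⟩ := star.exists_min_image (fun r => (bb - r.1) % (2*(m:ℤ))) ⟨b0, hb0star⟩
  have hJS : J ∈ S := (Finset.mem_filter.1 hJstar).1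
  have hJsm : SM m J.1 J.2 bb := by
    have := (Finset.mem_filter.1 hJstar).2
    simpa using this
  set e := (bb - J.1) % (2*(m:ℤ)) with he
  have hestar : e ≤ lam0 := by
    have := hJmin b0 hb0star
    have h0 : (bb - b0.1) % (2*(m:ℤ)) = lam0 :=
      emod_eq (hlam b0 hb0).1 (by have := (hlam' b0 hb0).2; omega) ⟨0, by ring⟩
    rw [h0] at this
    exact this
  have he0 : 0 ≤ e := (emod_spec hm _).1
  set v := bb - e with hv
  have hvp0 : p0 ≤ v := by rw [hv, hbb]; omega
  have hvlam : v ≤ p0 + lam0 := by rw [hv]; omega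
  refine ⟨v, fun q hq => ?_⟩
  by_cases hqb : SM m q.1 q.2 bb
  · left
    obtain ⟨hq0', hq1', j, hj⟩ := emod_spec hm (bb - q.1)
    set eq := (bb - q.1) % (2*(m:ℤ)) with heq
    have heqle : eq ≤ q.2 := hqb
    have hmin : e ≤ eq := hJmin q (Finset.mem_filter.2 ⟨hq, hqb⟩)
    unfold SM
    rw [emod_eq (x := v - q.1) (r := eq - e) (by omega) (by omega) ⟨j, by rw [hv]; linarith⟩]
    omega
  · have hb02 : lam0 ≤ (m:ℤ) - 1 := (hlam' b0 hb0).2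
    have hb01 : 0 ≤ lam0 := (hlam b0 hb0).1
    have hα : SM m q.1 q.2 p0 := by
      rcases hpair b0 hb0 q hq with h | h
      · exact h
      · exact absurd h hqb
    obtain ⟨hα0, hα1, j, hj⟩ := emod_spec hm (p0 - q.1)
    set α := (p0 - q.1) % (2*(m:ℤ)) with hαe
    have hαle : α ≤ q.2 := hα
    set c := p0 - α with hc
    set d := c + q.2 with hd
    have hq2 := hlam' q hq
    have hcd : c ≤ p0 ∧ p0 ≤ d := by omega
    have hq1c : q.1 = c - 2*(m:ℤ)*j := by omega
    by_cases hqv : SM m q.1 q.2 v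
    · exact Or.inl hqv
    have hvd : d < v := by
      by_contra hcon
      push_neg at hcon
      apply hqv
      unfold SM
      rw [emod_eq (x := v - q.1) (r := v - c) (by omega)
        (by have := (hlam' b0 hb0).2; omega) ⟨j, by omega⟩]
      omega
    obtain ⟨_, _, jJ, hjJ⟩ := emod_spec hm (bb - J.1)
    have hJ1v : J.1 = v - 2*(m:ℤ)*jJ := by rw [hv]; omega
    have hpq := hpair J hJS q hq
    rw [hJ1v] at hpq
    rcases hpq with h | h
    · rw [show v - 2*(m:ℤ)*jJ = v + 2*(m:ℤ)*(-jJ) by ring, SM_shift] at h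
      exact absurd h hqv
    rw [show v - 2*(m:ℤ)*jJ + J.2 = (v + J.2) + 2*(m:ℤ)*(-jJ) by ring, SM_shift] at h
    have hJ2 := hlam' J hJS
    rcases lt_or_ge (v + J.2 - c) (2*(m:ℤ)) with hcase | hcase
    · exfalso
      have : (v + J.2 - q.1) % (2*(m:ℤ)) = v + J.2 - c :=
        emod_eq (by omega) hcase ⟨j, by omega⟩
      have hle : v + J.2 - c ≤ q.2 := by
        have := h; unfold SM at this; omega
      omega
    · right
      unfold SM
      rw [emod_eq (x := v + (m:ℤ) - q.1) (r := v + (m:ℤ) - c - 2*(m:ℤ))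
        (by omega) (by omega) ⟨j+1, by rw [hq1c]; ring⟩]
      omega

def arcK {n : ℕ} : MArc n → ℤ
  | .c k _ => (k.val : ℤ)
  | .t _ _ => 0

def arcD {n : ℕ} : MArc n → ℤ
  | .c k l => ((l - k).val : ℤ)
  | .t _ _ => 0

end CtriAux

/-- For even `n = 2m`, every crosscap triangulation of `M_n` contains at least one
diagonal crosscap arc `(i, n/2 + i)`. -/


theorem ctri_has_diagonal (n m : ℕ) (hn : n = 2 * m) (hm : 1 ≤ m)
    (T : Finset (MArc n)) (hT : IsCTri n T) :
    ∃ i : ZMod n, MArc.c i (i + (m : ZMod n)) ∈ T := by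
  subst hn
  classical
  haveI : NeZero (2*m) := ⟨by omega⟩
  obtain ⟨⟨hval, hcpt, hmax⟩, hc⟩ := hT
  have hNC : ∀ P Q : ℤ × ℤ, mNoCross (2*m) P Q → CtriAux.NC m P Q := by
    intro P Q h s
    exact (h s).trans_eq (by push_cast; ring)
  have hNC' : ∀ P Q : ℤ × ℤ, CtriAux.NC m P Q → mNoCross (2*m) P Q := by
    intro P Q h s
    exact (h s).trans_eq (by push_cast; ring)
  have hcv : ∀ k l : ZMod (2*m),
      mCurve (2*m) k l = CtriAux.cv m ((k.val : ℤ)) (((l - k).val : ℤ)) := by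
    intro k l
    simp only [mCurve, CtriAux.cv]
    exact CtriAux.pair_eq rfl (by push_cast; ring)
  have hmi : ∀ k l : ZMod (2*m),
      mMirror (2*m) k l = CtriAux.mi m ((k.val : ℤ)) (((l - k).val : ℤ)) := by
    intro k l
    simp only [mMirror, CtriAux.mi]
    exact CtriAux.pair_eq rfl (by push_cast; ring)
  -- range of arcD
  have hDrange : ∀ (k l : ZMod (2*m)), 0 ≤ ((l - k).val : ℤ) ∧ ((l - k).val : ℤ) < 2*(m:ℤ) := by
    intro k l
    constructor
    · positivity
    · exact_mod_cast Int.ofNat_lt.2 ((l - k).val_lt)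
  -- the family of spans
  set f : MArc (2*m) → ℤ × ℤ := fun a =>
    (CtriAux.pp m (CtriAux.arcK a) (CtriAux.arcD a),
     CtriAux.ll m (CtriAux.arcK a) (CtriAux.arcD a)) with hf
  set S : Finset (ℤ × ℤ) := T.image f with hS
  have hlamS : ∀ q ∈ S, 0 ≤ q.2 ∧ q.2 ≤ (m:ℤ) := by
    intro q hq
    obtain ⟨a, ha, rfl⟩ := Finset.mem_image.1 hq
    obtain ⟨k, l, rfl⟩ := hc a ha
    have hdr := hDrange k l
    simp only [hf, CtriAux.arcK, CtriAux.arcD]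
    exact CtriAux.ll_bounds hdr.1 hdr.2
  have hpairS : ∀ q ∈ S, ∀ r ∈ S,
      CtriAux.SM m r.1 r.2 q.1 ∨ CtriAux.SM m r.1 r.2 (q.1 + q.2) := by
    intro q hq r hr
    obtain ⟨a, ha, rfl⟩ := Finset.mem_image.1 hq
    obtain ⟨b, hb, rfl⟩ := Finset.mem_image.1 hr
    obtain ⟨k, l, rfl⟩ := hc a ha
    obtain ⟨k', l', rfl⟩ := hc b hb
    have hab : cCompat (2*m) k l k' l' := hcpt _ ha _ hb
    have hba : cCompat (2*m) k' l' k l := hcpt _ hb _ ha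
    have h1 := hNC _ _ hab.1
    have h2 := hNC _ _ hab.2
    have h3 := hNC _ _ hba.2
    rw [hcv, hcv] at h1
    rw [hcv, hmi] at h2
    rw [hcv, hmi] at h3
    have hD := hDrange k l
    have hD' := hDrange k' l'
    simp only [hf, CtriAux.arcK, CtriAux.arcD]
    exact CtriAux.L1 hm hD.1 hD.2 hD'.1 hD'.2 h1 h2 h3
  obtain ⟨v, hvS⟩ := CtriAux.comb hm S hlamS hpairS
  -- the diagonal candidate
  set i : ZMod (2*m) := ((v : ℤ) : ZMod (2*m)) with hi
  have hV : ((i.val : ℤ)) = v % ((2*m : ℕ) : ℤ) := ZMod.val_intCast v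
  have hVv : ∃ cc : ℤ, v = (i.val : ℤ) + 2*(m:ℤ)*cc := by
    obtain ⟨h0, h1, j, hj⟩ := CtriAux.emod_spec hm v
    refine ⟨j, ?_⟩
    rw [hV]
    push_cast
    linarith [hj]
  obtain ⟨cc, hcc⟩ := hVv
  set V : ℤ := (i.val : ℤ) with hVdef
  -- diag curve/mirror
  have hmval : ((m : ZMod (2*m))).val = m := by
    rw [ZMod.val_natCast]
    exact Nat.mod_eq_of_lt (by omega)
  have hsub : i + (m : ZMod (2*m)) - i = (m : ZMod (2*m)) := by ring
  have hdiagcv : mCurve (2*m) i (i + (m : ZMod (2*m))) = (2*V, 2*V) := by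
    simp only [mCurve, hsub, hmval]
    exact CtriAux.pair_eq rfl (by push_cast; ring)
  have hdiagmi : mMirror (2*m) i (i + (m : ZMod (2*m))) = (2*V + 2*(m:ℤ), 2*V + 2*(m:ℤ)) := by
    simp only [mMirror, hsub, hmval]
    exact CtriAux.pair_eq (by push_cast; ring) (by push_cast; ring)
  refine ⟨i, hmax _ trivial ?_⟩
  intro b hb
  obtain ⟨k, l, rfl⟩ := hc b hb
  have hDb := hDrange k l
  have hsm : CtriAux.SM m (CtriAux.pp m ((k.val:ℤ)) (((l-k).val:ℤ)))
      (CtriAux.ll m ((k.val:ℤ)) (((l-k).val:ℤ))) v ∨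
      CtriAux.SM m (CtriAux.pp m ((k.val:ℤ)) (((l-k).val:ℤ)))
      (CtriAux.ll m ((k.val:ℤ)) (((l-k).val:ℤ))) (v + (m:ℤ)) := by
    have h0 := hvS (f (MArc.c k l)) (Finset.mem_image_of_mem f hb)
    simp only [hf, CtriAux.arcK, CtriAux.arcD] at h0
    exact h0
  have hsm2 : CtriAux.SM m (CtriAux.pp m ((k.val:ℤ)) (((l-k).val:ℤ)))
      (CtriAux.ll m ((k.val:ℤ)) (((l-k).val:ℤ))) (v + (m:ℤ)) ∨
      CtriAux.SM m (CtriAux.pp m ((k.val:ℤ)) (((l-k).val:ℤ)))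
      (CtriAux.ll m ((k.val:ℤ)) (((l-k).val:ℤ))) ((v + (m:ℤ)) + (m:ℤ)) := by
    rcases hsm with h | h
    · right
      rw [show v + (m:ℤ) + (m:ℤ) = v + 2*(m:ℤ)*1 by ring, CtriAux.SM_shift]
      exact h
    · left; exact h
  have hcore1 := CtriAux.L2 hm hDb.1 hDb.2 hsm
  have hcore2 := CtriAux.L2 hm hDb.1 hDb.2 hsm2
  constructor
  · show cCompat (2*m) i (i + (m : ZMod (2*m))) k l
    refine ⟨?_, ?_⟩
    · rw [hdiagcv, hcv k l]
      intro s
      exact (hcore1 (-s - cc)).trans_eq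
        (by simp only [CtriAux.cv]; push_cast; rw [hcc]; ring)
    · rw [hdiagcv, hmi k l]
      intro s
      exact (hcore2 (-s - cc - 1)).trans_eq
        (by simp only [CtriAux.mi]; push_cast; rw [hcc]; ring)
  · show cCompat (2*m) k l i (i + (m : ZMod (2*m)))
    refine ⟨?_, ?_⟩
    · rw [hdiagcv, hcv k l]
      intro s
      exact (hcore1 (s - cc)).trans_eq
        (by simp only [CtriAux.cv]; push_cast; rw [hcc]; ring)
    · rw [hdiagmi, hcv k l]
      intro s
      exact (hcore2 (s - cc)).trans_eq
        (by simp only [CtriAux.cv]; push_cast; rw [hcc]; ring)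
end

section
/- For odd n = 2k+1, every crosscap triangulation of M_n contains an odd number of d-triangles; in particular it contains at least one d-triangle. -/
/-- A d-triangle with special vertex `i` (here `n = 2k+1`). -/
def HasDTriangle (n k : ℕ) (T : Finset (MArc n)) (i : ZMod n) : Prop :=
  MArc.c i (i + (k : ZMod n)) ∈ T ∧ MArc.c i (i + (k : ZMod n) + 1) ∈ T

/-! ### Auxiliary arithmetic machinery -/

/-- `Gp n x y` : no `n`-translate of the pair `(x, y)` straddles `0`. -/
def Gp (n x y : ℤ) : Prop := ∀ s : ℤ, 0 ≤ (x + n * s) * (y + n * s)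

lemma G_interval {n x y : ℤ} (hn : 0 ≤ n) (t : ℤ)
    (h : n * t ≤ x ∧ x ≤ n * (t + 1) ∧ n * t ≤ y ∧ y ≤ n * (t + 1)) : Gp n x y := by
  obtain ⟨h1, h2, h3, h4⟩ := h
  intro s
  have e1 : n * (t + s) = n * t + n * s := by ring
  have e2 : n * (t + 1 + s) = n * (t + 1) + n * s := by ring
  rcases le_or_gt (-t) s with hs | hs
  · have h5 : 0 ≤ n * (t + s) := mul_nonneg hn (by omega)
    exact mul_nonneg (by linarith) (by linarith)
  · have h5 : n * (t + 1 + s) ≤ 0 := mul_nonpos_of_nonneg_of_nonpos hn (by omega)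
    have hx : x + n * s ≤ 0 := by linarith
    have hy : y + n * s ≤ 0 := by linarith
    nlinarith

lemma not_G {n x y : ℤ} (hG : Gp n x y) (t : ℤ)
    (h : x + n * t < 0 ∧ 0 < y + n * t) : False := by
  have := hG t
  nlinarith [mul_neg_of_neg_of_pos h.1 h.2]

lemma not_G' {n x y : ℤ} (hG : Gp n x y) (t : ℤ)
    (h : 0 < x + n * t ∧ y + n * t < 0) : False := by
  have := hG t
  nlinarith [mul_neg_of_pos_of_neg h.1 h.2]

lemma val_add_aux {n : ℕ} [NeZero n] (a b : ZMod n) :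
    ((a + b).val : ℤ) = (a.val : ℤ) + b.val ∨
    ((a + b).val : ℤ) = (a.val : ℤ) + b.val - n := by
  have h : (a + b).val = (a.val + b.val) % n := ZMod.val_add a b
  have h1 := ZMod.val_lt a
  have h2 := ZMod.val_lt b
  rcases Nat.lt_or_ge (a.val + b.val) n with hlt | hge
  · rw [Nat.mod_eq_of_lt hlt] at h; left; omega
  · have h3 : (a.val + b.val) % n = a.val + b.val - n := by
      rw [Nat.mod_eq_sub_mod hge, Nat.mod_eq_of_lt (by omega)]
    rw [h3] at h; right; omega

lemma val_sub_aux {n : ℕ} [NeZero n] (a b : ZMod n) :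
    ((a - b).val : ℤ) = (a.val : ℤ) - b.val ∨
    ((a - b).val : ℤ) = (a.val : ℤ) - b.val + n := by
  have e : (a - b) + b = a := by ring
  have h := val_add_aux (a - b) b
  rw [e] at h
  rcases h with h | h
  · left; omega
  · right; omega

/-- The key reformulation of `cCompat` in terms of `Gp` and cyclic-difference values. -/
lemma cCompat_iff {n : ℕ} [NeZero n] (x₁ y₁ x₂ y₂ : ZMod n) :
    cCompat n x₁ y₁ x₂ y₂ ↔
      (Gp n ((x₂ - x₁).val) (((x₂ - x₁).val : ℤ) + ((y₂ - x₂).val : ℤ) - ((y₁ - x₁).val : ℤ)) ∧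
       Gp n (((x₂ - x₁).val : ℤ) + ((y₂ - x₂).val : ℤ))
            (((x₂ - x₁).val : ℤ) + (n : ℤ) - ((y₁ - x₁).val : ℤ))) := by
  obtain ⟨t, ht⟩ : ∃ t : ℤ, (x₂.val : ℤ) = ((x₂ - x₁).val : ℤ) + n * t + x₁.val := by
    rcases val_sub_aux x₂ x₁ with h | h
    · exact ⟨0, by omega⟩
    · exact ⟨-1, by omega⟩
  constructor
  · rintro ⟨h1, h2⟩
    constructor
    · intro s
      have key := h1 (s - t)
      simp only [mCurve, mNoCross] at key
      rw [ht] at key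
      nlinarith [key]
    · intro s
      have key := h2 (s - t)
      simp only [mCurve, mMirror, mNoCross] at key
      rw [ht] at key
      nlinarith [key]
  · rintro ⟨h1, h2⟩
    constructor
    · intro s
      have key := h1 (s + t)
      simp only [mCurve, mNoCross]
      rw [ht]
      nlinarith [key]
    · intro s
      have key := h2 (s + t)
      simp only [mCurve, mMirror, mNoCross]
      rw [ht]
      nlinarith [key]

section MainLemmas

variable {n kv : ℕ} [NeZero n]

/-- C1, orientation 1: an arc `(i,w)` with `(w-i).val ≤ k` is incompatible with any
arc both of whose endpoints lie in the far window `{i+k+1, …, i+2k}`. -/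
lemma negA (hn : n = 2 * kv + 1) (i w p q : ZMod n)
    (hW : (w - i).val ≤ kv) (hA : kv + 1 ≤ (p - i).val) (hB : kv + 1 ≤ (q - i).val) :
    ¬ (cCompat n i w p q ∧ cCompat n p q i w) := by
  rintro ⟨h1, h2⟩
  rw [cCompat_iff] at h1 h2
  obtain ⟨h11, h12⟩ := h1
  have hBrel := val_add_aux (q - p) (p - i)
  rw [show (q - p) + (p - i) = q - i by ring] at hBrel
  have b1 := ZMod.val_lt (p - i)
  have b2 := ZMod.val_lt (q - i)
  have b3 := ZMod.val_lt (q - p)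
  have b4 := ZMod.val_lt (w - i)
  rcases hBrel with h | h
  · exact not_G h12 (-1) (by omega)
  · exact not_G h11 (-1) (by omega)

/-- C1, orientation 2. -/
lemma negB (hn : n = 2 * kv + 1) (i w p q : ZMod n)
    (hW : (w - i).val ≤ kv) (hA : kv + 1 ≤ (p - i).val) (hB : kv + 1 ≤ (q - i).val) :
    ¬ (cCompat n w i p q ∧ cCompat n p q w i) := by
  rintro ⟨h1, h2⟩
  rw [cCompat_iff] at h1 h2
  obtain ⟨h11, h12⟩ := h1
  have hBrel := val_add_aux (q - p) (p - i)
  rw [show (q - p) + (p - i) = q - i by ring] at hBrel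
  have hA2rel := val_add_aux (p - i) (i - w)
  rw [show (p - i) + (i - w) = p - w by ring] at hA2rel
  have hWrel := val_add_aux (w - i) (i - w)
  rw [show (w - i) + (i - w) = 0 by ring, ZMod.val_zero] at hWrel
  have b1 := ZMod.val_lt (p - i)
  have b2 := ZMod.val_lt (q - i)
  have b3 := ZMod.val_lt (q - p)
  have b4 := ZMod.val_lt (w - i)
  have b5 := ZMod.val_lt (i - w)
  have b6 := ZMod.val_lt (p - w)
  rcases hBrel with h | h <;> rcases hA2rel with h' | h' <;> rcases hWrel with h'' | h'' <;>
    first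
      | omega
      | exact not_G h11 (-1) (by omega)
      | exact not_G h12 (-1) (by omega)
      | exact not_G' h11 0 (by omega)
      | exact not_G' h12 0 (by omega)
      | exact not_G' h11 (-1) (by omega)
      | exact not_G' h12 (-1) (by omega)
      | exact not_G h11 0 (by omega)
      | exact not_G h12 0 (by omega)

/-- C2, orientation 1: an arc `(i,w)` with `(w-i).val ≥ k+1` is incompatible with any
arc both of whose endpoints lie in the near window `{i+1, …, i+k}`. -/
lemma negC (hn : n = 2 * kv + 1) (i w p q : ZMod n)
    (hW : kv + 1 ≤ (w - i).val) (hA1 : 1 ≤ (p - i).val) (hA2 : (p - i).val ≤ kv)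
    (hB1 : 1 ≤ (q - i).val) (hB2 : (q - i).val ≤ kv) :
    ¬ (cCompat n i w p q ∧ cCompat n p q i w) := by
  rintro ⟨h1, h2⟩
  rw [cCompat_iff] at h1 h2
  obtain ⟨h11, h12⟩ := h1
  have hBrel := val_add_aux (q - p) (p - i)
  rw [show (q - p) + (p - i) = q - i by ring] at hBrel
  have b1 := ZMod.val_lt (p - i)
  have b2 := ZMod.val_lt (q - i)
  have b3 := ZMod.val_lt (q - p)
  have b4 := ZMod.val_lt (w - i)
  rcases hBrel with h | h
  · exact not_G' h11 0 (by omega)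
  · exact not_G' h12 (-1) (by omega)

/-- C2, orientation 2. -/
lemma negD (hn : n = 2 * kv + 1) (i w p q : ZMod n)
    (hW : kv + 1 ≤ (w - i).val) (hA1 : 1 ≤ (p - i).val) (hA2 : (p - i).val ≤ kv)
    (hB1 : 1 ≤ (q - i).val) (hB2 : (q - i).val ≤ kv) :
    ¬ (cCompat n w i p q ∧ cCompat n p q w i) := by
  rintro ⟨h1, h2⟩
  rw [cCompat_iff] at h1 h2
  obtain ⟨h11, h12⟩ := h1
  have hBrel := val_add_aux (q - p) (p - i)
  rw [show (q - p) + (p - i) = q - i by ring] at hBrel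
  have hA2rel := val_add_aux (p - i) (i - w)
  rw [show (p - i) + (i - w) = p - w by ring] at hA2rel
  have hWrel := val_add_aux (w - i) (i - w)
  rw [show (w - i) + (i - w) = 0 by ring, ZMod.val_zero] at hWrel
  have b1 := ZMod.val_lt (p - i)
  have b2 := ZMod.val_lt (q - i)
  have b3 := ZMod.val_lt (q - p)
  have b4 := ZMod.val_lt (w - i)
  have b5 := ZMod.val_lt (i - w)
  have b6 := ZMod.val_lt (p - w)
  rcases hBrel with h | h <;> rcases hA2rel with h' | h' <;> rcases hWrel with h'' | h'' <;>
    first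
      | omega
      | exact not_G h11 (-1) (by omega)
      | exact not_G h12 (-1) (by omega)
      | exact not_G' h11 0 (by omega)
      | exact not_G' h12 0 (by omega)
      | exact not_G' h11 (-1) (by omega)
      | exact not_G' h12 (-1) (by omega)
      | exact not_G h11 0 (by omega)
      | exact not_G h12 0 (by omega)

/-- Sufficiency: a "diameter" arc `(i, i+d)` with `d ∈ {k, k+1}` is compatible with any
arc whose endpoints do not both lie strictly on one side of it. -/
lemma posA (hn : n = 2 * kv + 1) (hk : 1 ≤ kv) (i p q : ZMod n) (d : ℕ)
    (hd1 : kv ≤ d) (hd2 : d ≤ kv + 1)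
    (h1 : ¬(1 ≤ (p - i).val ∧ (p - i).val ≤ kv ∧ 1 ≤ (q - i).val ∧ (q - i).val ≤ kv))
    (h2 : ¬(kv + 1 ≤ (p - i).val ∧ kv + 1 ≤ (q - i).val)) :
    cCompat n i (i + (d : ZMod n)) p q ∧ cCompat n p q i (i + (d : ZMod n)) := by
  have hd : ((i + (d : ZMod n)) - i) = (d : ZMod n) := by ring
  have hdv : ((d : ZMod n)).val = d := by
    rw [ZMod.val_natCast]; exact Nat.mod_eq_of_lt (by omega)
  rw [cCompat_iff, cCompat_iff, hd, hdv]
  have hBrel := val_add_aux (q - p) (p - i)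
  rw [show (q - p) + (p - i) = q - i by ring] at hBrel
  have hA'rel := val_add_aux (i - p) (p - i)
  rw [show (i - p) + (p - i) = 0 by ring, ZMod.val_zero] at hA'rel
  have b1 := ZMod.val_lt (p - i)
  have b2 := ZMod.val_lt (q - i)
  have b3 := ZMod.val_lt (q - p)
  have b4 := ZMod.val_lt (i - p)
  have hnn : 0 ≤ (n : ℤ) := by positivity
  rcases hBrel with h | h <;> rcases hA'rel with h' | h' <;>
    rcases le_or_gt ((p - i).val) kv with h3 | h3 <;>
    rcases le_or_gt ((q - i).val) kv with h4 | h4 <;>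
    rcases Nat.eq_zero_or_pos ((p - i).val) with h5 | h5 <;>
    refine ⟨⟨?_, ?_⟩, ?_, ?_⟩ <;>
    first
      | exact G_interval hnn 0 (by omega)
      | exact G_interval hnn (-1) (by omega)
      | exact G_interval hnn 1 (by omega)

end MainLemmas

/-- For odd `n = 2k+1`, every crosscap triangulation of `M_n` contains an odd number
of d-triangles; in particular it contains at least one. -/
theorem ctri_odd_dtriangles (n k : ℕ) (hn : n = 2 * k + 1)
    (T : Finset (MArc n)) (hT : IsCTri n T) :
    Odd {i : ZMod n | HasDTriangle n k T i}.ncard ∧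
    ∃ i : ZMod n, HasDTriangle n k T i := by
  classical
  subst hn
  haveI : NeZero (2 * k + 1) := ⟨by omega⟩
  -- basic consequences of being a triangulation
  have hpcc : ∀ {p q r s : ZMod (2 * k + 1)}, MArc.c p q ∈ T → MArc.c r s ∈ T → cCompat (2 * k + 1) p q r s := by
    intro p q r s h1 h2
    exact hT.1.2.1 (MArc.c p q) h1 (MArc.c r s) h2
  have hmaxc : ∀ p q : ZMod (2 * k + 1),
      (∀ r s : ZMod (2 * k + 1), MArc.c r s ∈ T → cCompat (2 * k + 1) p q r s ∧ cCompat (2 * k + 1) r s p q) →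
      MArc.c p q ∈ T := by
    intro p q h
    refine hT.1.2.2 (MArc.c p q) trivial ?_
    intro b hb
    obtain ⟨r, s, rfl⟩ := hT.2 b hb
    exact ⟨(h r s hb).1, (h r s hb).2⟩
  rcases Nat.eq_zero_or_pos k with hk0 | hk
  · -- degenerate case n = 1
    subst hk0
    have h0 : ∀ a : ZMod (2 * 0 + 1), a.val = 0 := by
      intro a; have := ZMod.val_lt a; omega
    have hcc : ∀ i j r s : ZMod (2 * 0 + 1), cCompat (2 * 0 + 1) i j r s := by
      intro i j r s
      constructor <;> intro t <;>
        simp only [mCurve, mMirror, h0] <;> push_cast <;>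
        rcases le_or_gt 0 t with ht | ht <;> nlinarith
    have hall : ∀ i j : ZMod (2 * 0 + 1), MArc.c i j ∈ T :=
      fun i j => hmaxc i j (fun r s _ => ⟨hcc _ _ _ _, hcc _ _ _ _⟩)
    have hd : ∀ i : ZMod (2 * 0 + 1), HasDTriangle (2 * 0 + 1) 0 T i := fun i => ⟨hall _ _, hall _ _⟩
    have hset : {i : ZMod (2 * 0 + 1) | HasDTriangle (2 * 0 + 1) 0 T i} = Set.univ := by
      ext i; simp [hd i]
    rw [hset, Set.ncard_univ, Nat.card_eq_fintype_card, ZMod.card]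
    exact ⟨⟨0, by omega⟩, ⟨0, hd 0⟩⟩
  -- main case k ≥ 1, so (2 * k + 1) ≥ 3
  have hN3 : 3 ≤ (2 * k + 1) := by omega
  -- every marked point is an endpoint of some arc of T
  have hcov : ∀ m : ZMod (2 * k + 1), ∃ p q, MArc.c p q ∈ T ∧ (p = m ∨ q = m) := by
    intro m
    by_contra hcon
    push_neg at hcon
    have h2ne : ((2 : ℕ) : ZMod (2 * k + 1)) ≠ 0 := by
      intro h
      have := congrArg ZMod.val h
      rw [ZMod.val_natCast, Nat.mod_eq_of_lt (by omega), ZMod.val_zero] at this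
      omega
    have e2 : (m + 1) - (m - 1) = ((2 : ℕ) : ZMod (2 * k + 1)) := by push_cast; ring
    have hne : (m - 1) ≠ (m + 1) := by
      intro h
      apply h2ne
      rw [← e2, ← h]; ring
    have hint : ∀ r : ZMod (2 * k + 1), r ≠ m → ¬ inIntArc (2 * k + 1) (m - 1) (m + 1) r := by
      intro r hr
      simp only [inIntArc, if_neg hne]
      rintro ⟨hr1, hr2, hr3⟩
      rw [e2, ZMod.val_natCast, Nat.mod_eq_of_lt (by omega)] at hr3
      have hv0 : (r - (m - 1)).val ≠ 0 := by
        intro h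
        exact hr1 (by rwa [ZMod.val_eq_zero, sub_eq_zero] at h)
      have hv1 : (r - (m - 1)).val = 1 := by omega
      apply hr
      haveI : Fact (1 < 2 * k + 1) := ⟨by omega⟩
      have h1v : (1 : ZMod (2 * k + 1)).val = 1 := ZMod.val_one _
      have : r - (m - 1) = 1 := ZMod.val_injective _ (by rw [hv1, h1v])
      linear_combination this
    have hmem : MArc.t (m - 1) (m + 1) ∈ T := by
      refine hT.1.2.2 _ ?_ ?_
      · right
        rw [e2, ZMod.val_natCast, Nat.mod_eq_of_lt (by omega)]
      · intro b hb
        obtain ⟨r, s, rfl⟩ := hT.2 b hb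
        have hr := hcon r s hb
        have hct : ctCompat (2 * k + 1) r s (m - 1) (m + 1) :=
          ⟨hint r (by tauto), hint s (by tauto)⟩
        exact ⟨hct, hct⟩
    obtain ⟨i, j, hij⟩ := hT.2 _ hmem
    cases hij
  -- the window predicate and the obstruction predicate
  set W : ZMod (2 * k + 1) → ZMod (2 * k + 1) → Prop := fun i x => 1 ≤ (x - i).val ∧ (x - i).val ≤ k with hW
  set bs : ZMod (2 * k + 1) → Prop := fun i => ∃ p q, MArc.c p q ∈ T ∧ W i p ∧ W i q with hbs
  have hWk : ∀ i x : ZMod (2 * k + 1), W (i + (k : ZMod (2 * k + 1))) x ↔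
      (k + 1 ≤ (x - i).val ∧ (x - i).val ≤ 2 * k) := by
    intro i x
    have e : x - (i + (k : ZMod (2 * k + 1))) = (x - i) - (k : ZMod (2 * k + 1)) := by ring
    have hkv : ((k : ZMod (2 * k + 1))).val = k := by
      rw [ZMod.val_natCast]; exact Nat.mod_eq_of_lt (by omega)
    have h := val_sub_aux (x - i) ((k : ZMod (2 * k + 1)))
    rw [hkv] at h
    have b1 := ZMod.val_lt (x - i)
    have b2 := ZMod.val_lt ((x - i) - (k : ZMod (2 * k + 1)))
    simp only [hW, e]
    omega
  -- the two diameters at i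
  have hkv : ((k : ZMod (2 * k + 1))).val = k := by
    rw [ZMod.val_natCast]; exact Nat.mod_eq_of_lt (by omega)
  have hdiam1 : ∀ i : ZMod (2 * k + 1), ((i + (k : ZMod (2 * k + 1))) - i).val = k := by
    intro i; rw [show (i + (k : ZMod (2 * k + 1))) - i = (k : ZMod (2 * k + 1)) by ring, hkv]
  have hdiam2 : ∀ i : ZMod (2 * k + 1), ((i + (k : ZMod (2 * k + 1)) + 1) - i).val = k + 1 := by
    intro i
    rw [show (i + (k : ZMod (2 * k + 1)) + 1) - i = (((k + 1 : ℕ)) : ZMod (2 * k + 1)) by push_cast; ring,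
      ZMod.val_natCast]
    exact Nat.mod_eq_of_lt (by omega)
  -- main equivalence
  have hiff : ∀ i : ZMod (2 * k + 1), HasDTriangle (2 * k + 1) k T i ↔ ¬ bs i ∧ ¬ bs (i + (k : ZMod (2 * k + 1))) := by
    intro i
    constructor
    · rintro ⟨hd1, hd2⟩
      constructor
      · rintro ⟨p, q, hpq, ⟨hp1, hp2⟩, ⟨hq1, hq2⟩⟩
        exact negC rfl i (i + (k : ZMod (2 * k + 1)) + 1) p q (by rw [hdiam2]) hp1 hp2 hq1 hq2
          ⟨hpcc hd2 hpq, hpcc hpq hd2⟩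
      · rintro ⟨p, q, hpq, hp, hq⟩
        rw [hWk] at hp hq
        exact negA rfl i (i + (k : ZMod (2 * k + 1))) p q (by rw [hdiam1]) hp.1 hq.1
          ⟨hpcc hd1 hpq, hpcc hpq hd1⟩
    · rintro ⟨hb1, hb2⟩
      have hcompat : ∀ r s : ZMod (2 * k + 1), MArc.c r s ∈ T →
          (¬(1 ≤ (r - i).val ∧ (r - i).val ≤ k ∧ 1 ≤ (s - i).val ∧ (s - i).val ≤ k)) ∧
          (¬(k + 1 ≤ (r - i).val ∧ k + 1 ≤ (s - i).val)) := by
        intro r s hrs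
        constructor
        · rintro ⟨ha, hb, hc, hd⟩
          exact hb1 ⟨r, s, hrs, ⟨ha, hb⟩, ⟨hc, hd⟩⟩
        · rintro ⟨ha, hb⟩
          have hv1 := ZMod.val_lt (r - i)
          have hv2 := ZMod.val_lt (s - i)
          exact hb2 ⟨r, s, hrs, (hWk i r).2 ⟨ha, by omega⟩, (hWk i s).2 ⟨hb, by omega⟩⟩
      constructor
      · exact hmaxc _ _ (fun r s hrs =>
          posA rfl hk i r s k le_rfl (by omega) (hcompat r s hrs).1 (hcompat r s hrs).2)
      · have h := hmaxc i (i + ((k + 1 : ℕ) : ZMod (2 * k + 1))) (fun r s hrs =>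
          posA rfl hk i r s (k + 1) (by omega) le_rfl (hcompat r s hrs).1 (hcompat r s hrs).2)
        rwa [show i + ((k + 1 : ℕ) : ZMod (2 * k + 1)) = i + (k : ZMod (2 * k + 1)) + 1 by push_cast; ring] at h
  -- the two obstruction sets are disjoint
  have hnb : ∀ i : ZMod (2 * k + 1), ¬ (bs i ∧ bs (i + (k : ZMod (2 * k + 1)))) := by
    rintro i ⟨⟨p, q, hpq, hp, hq⟩, ⟨r, s, hrs, hr, hs⟩⟩
    rw [hWk] at hr hs
    obtain ⟨e, f, hef, hef'⟩ := hcov i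
    rcases hef' with rfl | rfl
    · -- arc (i, f)  (e = i)
      rcases le_or_gt ((f - e).val) k with hWc | hWc
      · exact negA rfl e f r s hWc hr.1 hs.1 ⟨hpcc hef hrs, hpcc hrs hef⟩
      · exact negC rfl e f p q (by omega) hp.1 hp.2 hq.1 hq.2 ⟨hpcc hef hpq, hpcc hpq hef⟩
    · -- arc (e, i)  (f = i)
      rcases le_or_gt ((e - f).val) k with hWc | hWc
      · exact negB rfl f e r s hWc hr.1 hs.1 ⟨hpcc hef hrs, hpcc hrs hef⟩
      · exact negD rfl f e p q (by omega) hp.1 hp.2 hq.1 hq.2 ⟨hpcc hef hpq, hpcc hpq hef⟩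
  -- counting
  set S1 : Finset (ZMod (2 * k + 1)) := Finset.univ.filter (fun i => bs i) with hS1
  set S2 : Finset (ZMod (2 * k + 1)) := Finset.univ.filter (fun i => bs (i + (k : ZMod (2 * k + 1)))) with hS2
  set DT : Finset (ZMod (2 * k + 1)) := Finset.univ.filter (fun i => HasDTriangle (2 * k + 1) k T i) with hDT
  have hseteq : {i : ZMod (2 * k + 1) | HasDTriangle (2 * k + 1) k T i} = ↑DT := by
    ext i; simp [hDT]
  have hdisj : Disjoint S1 S2 := by
    rw [Finset.disjoint_left]
    intro a ha hb
    rw [hS1, Finset.mem_filter] at ha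
    rw [hS2, Finset.mem_filter] at hb
    exact hnb a ⟨ha.2, hb.2⟩
  have hcardeq : S2.card = S1.card := by
    have himg : S2 = S1.image (fun i => i - (k : ZMod (2 * k + 1))) := by
      ext i
      simp only [hS1, hS2, Finset.mem_filter, Finset.mem_image, Finset.mem_univ, true_and]
      constructor
      · intro h; exact ⟨i + (k : ZMod (2 * k + 1)), h, by ring⟩
      · rintro ⟨a, ha, rfl⟩
        rwa [show a - (k : ZMod (2 * k + 1)) + (k : ZMod (2 * k + 1)) = a by ring]
    rw [himg, Finset.card_image_of_injective _ (sub_left_injective)]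
  have hcompl : DT = (S1 ∪ S2)ᶜ := by
    ext i
    simp only [hDT, hS1, hS2, Finset.mem_filter, Finset.mem_compl, Finset.mem_union,
      Finset.mem_univ, true_and]
    rw [hiff i]
    exact ⟨fun h hor => hor.elim h.1 h.2,
      fun h => ⟨fun h1 => h (Or.inl h1), fun h2 => h (Or.inr h2)⟩⟩
  have hcard : DT.card = (2 * k + 1) - 2 * S1.card := by
    rw [hcompl, Finset.card_compl, Finset.card_union_of_disjoint hdisj, hcardeq, ZMod.card]
    omega
  have hbound : S1.card + S2.card ≤ (2 * k + 1) := by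
    have := Finset.card_union_of_disjoint hdisj
    have h2 := Finset.card_le_univ (S1 ∪ S2)
    rw [ZMod.card] at h2
    omega
  have hodd : Odd DT.card := by
    rw [hcard]
    exact ⟨k - S1.card, by omega⟩
  constructor
  · rw [hseteq, Set.ncard_coe_finset]
    exact hodd
  · have hpos : DT.Nonempty := by
      rw [← Finset.card_pos]
      rcases hodd with ⟨m, hm⟩
      omega
    obtain ⟨i, hi⟩ := hpos
    rw [hDT, Finset.mem_filter] at hi
    exact ⟨i, hi.2⟩
end

section
/- If Δ_1 and Δ_2 are finite pure shellable simplicial complexes with shellings given by facet orderings (F_i) and (G_j) respectively, then the lexicographic ordering (F_i ∪ G_j), ordered first by i and then by j, is a shelling of the join Δ_1 ∗ Δ_2. -/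
/-- A family of facets indexed by a linear order is a shelling: for all `j < k` there
is `i < k` with `C j ∩ C k ⊆ C i ∩ C k` and `(C i ∩ C k).card = (C k).card - 1`. -/
def IsShellingAlt {V : Type} [DecidableEq V] {ι : Type} [LinearOrder ι]
    (C : ι → Finset V) : Prop :=
  ∀ k j : ι, j < k → ∃ i, i < k ∧ C j ∩ C k ⊆ C i ∩ C k ∧
    (C i ∩ C k).card = (C k).card - 1

lemma union_inter_union_disj {V : Type} [DecidableEq V] (a b c d : Finset V)
    (h1 : Disjoint a d) (h2 : Disjoint c b) :
    (a ∪ b) ∩ (c ∪ d) = (a ∩ c) ∪ (b ∩ d) := by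
  ext x
  simp only [Finset.mem_inter, Finset.mem_union]
  constructor
  · rintro ⟨h | h, h' | h'⟩
    · exact Or.inl ⟨h, h'⟩
    · exact absurd (h1.forall_ne_finset h h') (by simp)
    · exact absurd (h2.forall_ne_finset h' h) (by simp)
    · exact Or.inr ⟨h, h'⟩
  · rintro (⟨h, h'⟩ | ⟨h, h'⟩) <;> exact ⟨by tauto, by tauto⟩

/-- If `(F i)` and `(G j)` are shellings of two finite pure complexes on disjoint
vertex sets, then the lexicographic ordering `(F i ∪ G j)` (first by `i`, then by `j`)
is a shelling of the join. -/
theorem join_lex_shelling {V : Type} [DecidableEq V] (p q : ℕ)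
    (F : Fin p → Finset V) (G : Fin q → Finset V)
    (hFinj : Function.Injective F) (hGinj : Function.Injective G)
    (hdisj : ∀ i j, Disjoint (F i) (G j))
    (hFpure : ∀ i i', (F i).card = (F i').card)
    (hGpure : ∀ j j', (G j).card = (G j').card)
    (hF : IsShellingAlt F) (hG : IsShellingAlt G) :
    IsShellingAlt (fun x : Lex (Fin p × Fin q) => F (ofLex x).1 ∪ G (ofLex x).2) := by
  intro k j hjk
  set k1 := (ofLex k).1 with hk1
  set k2 := (ofLex k).2 with hk2
  set j1 := (ofLex j).1 with hj1
  set j2 := (ofLex j).2 with hj2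
  have hjk' : j1 < k1 ∨ j1 = k1 ∧ j2 < k2 := Prod.Lex.lt_iff.mp hjk
  have hdisjInter : ∀ a b c d, Disjoint (F a ∩ F b) (G c ∩ G d) := fun a b c d =>
    (hdisj a c).mono Finset.inter_subset_left Finset.inter_subset_left
  have hcardk : (F k1 ∪ G k2).card = (F k1).card + (G k2).card :=
    Finset.card_union_of_disjoint (hdisj k1 k2)
  rcases hjk' with h1 | ⟨h1, h2⟩
  · -- j1 < k1
    obtain ⟨i1, hi1, hsub, hcard⟩ := hF k1 j1 h1
    have hFk1pos : 0 < (F k1).card := by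
      rcases Nat.eq_zero_or_pos (F k1).card with h0 | h0
      · exfalso
        have : F j1 = F k1 := by
          rw [Finset.card_eq_zero.mp h0, Finset.card_eq_zero.mp ((hFpure j1 k1).trans h0)]
        exact absurd (hFinj this) (ne_of_lt h1)
      · exact h0
    have hlt : toLex (i1, k2) < k := Prod.Lex.lt_iff.mpr (Or.inl hi1)
    refine ⟨toLex (i1, k2), hlt, ?_, ?_⟩
    · simp only [ofLex_toLex]
      rw [union_inter_union_disj _ _ _ _ (hdisj j1 k2) (hdisj k1 j2),
        union_inter_union_disj _ _ _ _ (hdisj i1 k2) (hdisj k1 k2)]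
      exact Finset.union_subset_union hsub (by simp [Finset.inter_subset_right])
    · simp only [ofLex_toLex]
      rw [union_inter_union_disj _ _ _ _ (hdisj i1 k2) (hdisj k1 k2),
        Finset.card_union_of_disjoint (hdisjInter i1 k1 k2 k2), Finset.inter_self,
        hcard, hcardk]
      omega
  · -- j1 = k1, j2 < k2
    obtain ⟨i2, hi2, hsub, hcard⟩ := hG k2 j2 h2
    have hGk2pos : 0 < (G k2).card := by
      rcases Nat.eq_zero_or_pos (G k2).card with h0 | h0
      · exfalso
        have : G j2 = G k2 := by
          rw [Finset.card_eq_zero.mp h0, Finset.card_eq_zero.mp ((hGpure j2 k2).trans h0)]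
        exact absurd (hGinj this) (ne_of_lt h2)
      · exact h0
    have hlt : toLex (k1, i2) < k := Prod.Lex.lt_iff.mpr (Or.inr ⟨rfl, hi2⟩)
    refine ⟨toLex (k1, i2), hlt, ?_, ?_⟩
    · simp only [ofLex_toLex]
      have h1' : (ofLex j).1 = (ofLex k).1 := h1
      rw [h1',
        union_inter_union_disj _ _ _ _ (hdisj k1 k2) (hdisj k1 j2),
        union_inter_union_disj _ _ _ _ (hdisj k1 k2) (hdisj k1 i2)]
      exact Finset.union_subset_union (by simp) hsub
    · simp only [ofLex_toLex]
      rw [union_inter_union_disj _ _ _ _ (hdisj k1 k2) (hdisj k1 i2),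
        Finset.card_union_of_disjoint (hdisjInter k1 k1 i2 k2), Finset.inter_self,
        hcard, hcardk]
      omega
end
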